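/- arXiv:0904.2075 — 8 statements merged into one kernel-verified Lean document; each statement's English description precedes it below -/
import Mathlib

section
/- For any finite set A of elements of F_p, there exists ξ ∈ F_p, ξ ≠ 0, such that |A + ξ·A| ≥ (1/2)·min(|A|², p). -/
/-!
Let `n = |A|` and let `E_ξ` be the additive energy of `A` and `ξ·A`, i.e. the number of solutions
of `a₁ + ξ b₁ = a₂ + ξ b₂` in `A⁴`. By Cauchy–Schwarz, `n⁴ ≤ |A + ξ·A| E_ξ`. Summing `E_ξ` over
`ξ ≠ 0`, each of the `n²` solutions with `a₁ = a₂`, `b₁ = b₂` is counted `p - 1` times, a quadruple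
with `b₁ ≠ b₂` is counted at most once (it determines `ξ`), and no other quadruple is counted.
So some `ξ ≠ 0` has `(p - 1) E_ξ ≤ (p - 1) n² + n³ (n - 1)`, and `n⁴ / E_ξ ≥ min(n², p) / 2`
follows by distinguishing `n² ≤ p` and `n² > p`.
-/

open Finset
open scoped Pointwise Combinatorics.Additive

theorem Finset.addEnergy_image {α β : Type*} [Add α] [DecidableEq α] [DecidableEq β]
    (s : Finset α) (t : Finset β) {f : β → α} (hf : Set.InjOn f t) :
    E[s, t.image f] = #{x ∈ (s ×ˢ s) ×ˢ t ×ˢ t | x.1.1 + f x.2.1 = x.1.2 + f x.2.2} := by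
  refine (card_nbij (fun x => (x.1, f x.2.1, f x.2.2)) ?_ ?_ ?_).symm
  · intro x hx
    simp only [coe_filter, Set.mem_ofPred_eq, mem_product] at hx ⊢
    exact ⟨⟨hx.1.1, mem_image_of_mem f hx.1.2.1, mem_image_of_mem f hx.1.2.2⟩, hx.2⟩
  · rintro ⟨u, b₁, b₂⟩ hx ⟨v, c₁, c₂⟩ hy h
    simp only [coe_filter, Set.mem_ofPred_eq, mem_product, Prod.mk.injEq] at hx hy h
    simp only [h.1, hf hx.1.2.1 hy.1.2.1 h.2.1, hf hx.1.2.2 hy.1.2.2 h.2.2]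
  · rintro ⟨u, y₁, y₂⟩ hy
    simp only [coe_filter, Set.mem_ofPred_eq, mem_product, mem_image] at hy
    obtain ⟨⟨hu, ⟨b₁, hb₁, rfl⟩, ⟨b₂, hb₂, rfl⟩⟩, heq⟩ := hy
    exact ⟨(u, b₁, b₂), by simp [hu, hb₁, hb₂, heq]⟩

section Ring

variable {K : Type*} [Ring K] [NoZeroDivisors K] [DecidableEq K]

theorem card_filter_add_mul_eq_add_mul_le (s : Finset K) (a₁ a₂ b₁ b₂ : K) :
    #{ξ ∈ s | a₁ + ξ * b₁ = a₂ + ξ * b₂} ≤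
      (if a₁ = a₂ ∧ b₁ = b₂ then #s else 0) + if b₁ ≠ b₂ then 1 else 0 := by
  by_cases hb : b₁ = b₂
  · subst hb
    by_cases ha : a₁ = a₂ <;> simp [ha]
  · refine (card_le_one.2 fun x hx y hy => ?_).trans (by simp [hb])
    rw [mem_filter] at hx hy
    have solve : ∀ z, a₁ + z * b₁ = a₂ + z * b₂ → z * (b₁ - b₂) = a₂ - a₁ := fun z hz => by
      rw [mul_sub, sub_eq_sub_iff_add_eq_add, add_comm, hz]
    exact mul_right_cancel₀ (sub_ne_zero.2 hb) ((solve x hx.2).trans (solve y hy.2).symm)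

theorem sum_card_filter_add_mul_eq_add_mul_le (s A : Finset K) :
    ∑ ξ ∈ s, #{x ∈ (A ×ˢ A) ×ˢ A ×ˢ A | x.1.1 + ξ * x.2.1 = x.1.2 + ξ * x.2.2} ≤
      #s * #A ^ 2 + #A ^ 2 * #A.offDiag := by
  have hdiag : {x ∈ (A ×ˢ A) ×ˢ A ×ˢ A | x.1.1 = x.1.2 ∧ x.2.1 = x.2.2} = A.diag ×ˢ A.diag := by
    ext; simp only [mem_filter, mem_product, mem_diag]; grind
  have hoff : {x ∈ (A ×ˢ A) ×ˢ A ×ˢ A | x.2.1 ≠ x.2.2} = (A ×ˢ A) ×ˢ A.offDiag := by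
    ext; simp only [mem_filter, mem_product, mem_offDiag]; grind
  calc _ = ∑ x ∈ (A ×ˢ A) ×ˢ A ×ˢ A, #{ξ ∈ s | x.1.1 + ξ * x.2.1 = x.1.2 + ξ * x.2.2} := by
        simp only [card_filter]; exact sum_comm
    _ ≤ ∑ x ∈ (A ×ˢ A) ×ˢ A ×ˢ A,
          ((if x.1.1 = x.1.2 ∧ x.2.1 = x.2.2 then #s else 0) + if x.2.1 ≠ x.2.2 then 1 else 0) :=
        sum_le_sum fun x _ => card_filter_add_mul_eq_add_mul_le s _ _ _ _
    _ = #s * #A ^ 2 + #A ^ 2 * #A.offDiag := by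
        rw [sum_add_distrib, ← sum_filter, sum_const, sum_boole, hdiag, hoff]
        simp [card_product, sq, mul_comm]

end Ring

theorem Finset.exists_card_mul_le_sum {ι : Type*} {s : Finset ι} (hs : s.Nonempty) (f : ι → ℕ) :
    ∃ i ∈ s, #s * f i ≤ ∑ j ∈ s, f j := by
  obtain ⟨i, hi, hmin⟩ := s.exists_min_image f hs
  exact ⟨i, hi, by simpa using card_nsmul_le_sum s f (f i) hmin⟩

theorem exists_ne_zero_card_mul_addEnergy_smul_le {K : Type*} [Field K] [Fintype K]
    [DecidableEq K] (A : Finset K) :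
    ∃ ξ : K, ξ ≠ 0 ∧ (Fintype.card K - 1) * E[A, ξ • A] ≤
      (Fintype.card K - 1) * #A ^ 2 + #A ^ 2 * #A.offDiag := by
  have hcard : #(univ.erase (0 : K)) = Fintype.card K - 1 := card_erase_of_mem (mem_univ 0)
  obtain ⟨ξ, hξ, hle⟩ := exists_card_mul_le_sum (s := univ.erase 0) ⟨1, by simp⟩
    fun ξ : K => #{x ∈ (A ×ˢ A) ×ˢ A ×ˢ A | x.1.1 + ξ * x.2.1 = x.1.2 + ξ * x.2.2}
  have hξ0 : ξ ≠ 0 := ne_of_mem_erase hξ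
  refine ⟨ξ, hξ0, ?_⟩
  rw [smul_finset_def, addEnergy_image A A (f := (ξ • ·)) (mul_right_injective₀ hξ0).injOn, ← hcard]
  exact hle.trans (sum_card_filter_add_mul_eq_add_mul_le _ A)

theorem min_sq_mul_le_two_mul_sq_mul_sq {n q E : ℝ} (hn : 1 ≤ n) (hnq : n ≤ q) (hq : 1 < q)
    (havg : (q - 1) * E ≤ (q - 1) * n ^ 2 + n ^ 2 * (n * n - n)) :
    min (n ^ 2) q * E ≤ 2 * (n ^ 2 * n ^ 2) := by
  have hq₁ : 0 < q - 1 := sub_pos.2 hq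
  refine le_of_mul_le_mul_left ?_ hq₁
  rcases le_total (n ^ 2) q with h | h
  · have hdiff : n * n - n ≤ q - 1 := by nlinarith
    rw [min_eq_left h]
    nlinarith [mul_le_mul_of_nonneg_left havg (sq_nonneg n),
      mul_le_mul_of_nonneg_left hdiff (sq_nonneg (n ^ 2))]
  · have hdiff : q * (n * n - n) ≤ n ^ 2 * (q - 1) := by nlinarith
    rw [min_eq_right h]
    nlinarith [mul_le_mul_of_nonneg_left havg (by linarith : (0 : ℝ) ≤ q),
      mul_le_mul_of_nonneg_left hdiff (sq_nonneg n),
      mul_le_mul_of_nonneg_left h (mul_nonneg hq₁.le (sq_nonneg n))]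

theorem stmt_0 (p : ℕ) (hp : p.Prime) (A : Finset (ZMod p)) :
    ∃ ξ : ZMod p, ξ ≠ 0 ∧
      (1 / 2 : ℝ) * min ((A.card : ℝ) ^ 2) (p : ℝ) ≤ ((A + ξ • A).card : ℝ) := by
  have := Fact.mk hp
  rcases A.eq_empty_or_nonempty with rfl | hA
  · exact ⟨1, one_ne_zero, by simp⟩
  obtain ⟨ξ, hξ, havg⟩ := exists_ne_zero_card_mul_addEnergy_smul_le A
  rw [ZMod.card, offDiag_card] at havg
  have havg' : ((p : ℝ) - 1) * E[A, ξ • A] ≤ (p - 1) * #A ^ 2 + #A ^ 2 * (#A * #A - #A) := by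
    have := (Nat.cast_le (α := ℝ)).2 havg
    push_cast [Nat.cast_sub hp.one_le, Nat.cast_sub (Nat.le_mul_self #A)] at this
    exact this
  have hmin := min_sq_mul_le_two_mul_sq_mul_sq (by exact_mod_cast hA.card_pos)
    (by exact_mod_cast (by simpa using card_le_univ A)) (by exact_mod_cast hp.one_lt) havg'
  have hCS : (#A : ℝ) ^ 2 * #A ^ 2 ≤ #(A + ξ • A) * E[A, ξ • A] := by
    exact_mod_cast card_smul_finset₀ hξ A ▸ le_card_add_mul_addEnergy A (ξ • A)
  have hE : (0 : ℝ) < E[A, ξ • A] := by exact_mod_cast addEnergy_pos hA (hA.smul_finset (a := ξ))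
  have hS : min ((#A : ℝ) ^ 2) p ≤ 2 * #(A + ξ • A) :=
    le_of_mul_le_mul_right (by linarith) hE
  exact ⟨ξ, hξ, by linarith⟩
end

section
/- For any nonempty set A ⊆ F_p, the set 3A² − 3A² (sums of three products of pairs of elements of A minus three such products) has cardinality at least (1/2)·min(|A|², p). -/
/-!
Let `Q = {(a - b) / (c - d) : a, b, c, d ∈ A, c ≠ d}`. For `ξ ∈ Q`, dilating by `c - d` maps
`A + ξA + A` into `3A² - 3A²`, so `|A + ξA| ≤ |3A² - 3A²|`.

If `Q` is all of `F_p`, average over `ξ ≠ 0`: a pair `(a, b) ≠ (c, d)` satisfies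
`a + ξb = c + ξd` for at most one `ξ`, so some `ξ ≠ 0` has additive energy
`E(A, ξA) ≤ |A|² + |A|²(|A|² - 1)/(p - 1)`, and Cauchy–Schwarz `|A|⁴ ≤ |A + ξA| E(A, ξA)` gives
`|A + ξA| ≥ min(|A|², p)/2`.

Otherwise, since `0 ∈ Q` and `F_p` is generated by `1`, there is `ξ ∉ Q` with `ξ - 1 ∈ Q`.
Then `(a, b) ↦ a + ξb` is injective on `A × A`, and `A + ξA ⊆ A + (ξ - 1)A + A`, so
`|A|² ≤ |3A² - 3A²|`.
-/

open Finset
open scoped Pointwise Combinatorics.Additive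

theorem sum_card_collisions_le {ι α β : Type*} [DecidableEq α] [DecidableEq β]
    (U : Finset ι) (P : Finset α) (f : ι → α → β)
    (h : ∀ x ∈ P, ∀ y ∈ P, x ≠ y → #{u ∈ U | f u x = f u y} ≤ 1) :
    ∑ u ∈ U, #{xy ∈ P ×ˢ P | f u xy.1 = f u xy.2} ≤ #P * (#U + (#P - 1)) := by
  have hrow : ∀ x ∈ P, ∑ y ∈ P, #{u ∈ U | f u x = f u y} ≤ #U + (#P - 1) := by
    intro x hx
    rw [← add_sum_erase _ _ hx]
    refine add_le_add (card_filter_le _ _) ((sum_le_card_nsmul _ _ 1 fun y hy => ?_).trans ?_)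
    · exact h x hx y (mem_of_mem_erase hy) (ne_of_mem_erase hy).symm
    · rw [card_erase_of_mem hx, smul_eq_mul, mul_one]
  calc ∑ u ∈ U, #{xy ∈ P ×ˢ P | f u xy.1 = f u xy.2}
      = ∑ x ∈ P, ∑ y ∈ P, #{u ∈ U | f u x = f u y} := by
        simp only [card_filter]
        rw [sum_comm, sum_product]
    _ ≤ ∑ _x ∈ P, (#U + (#P - 1)) := sum_le_sum hrow
    _ = #P * (#U + (#P - 1)) := by rw [sum_const, smul_eq_mul]

theorem half_min_le_of_sq_le_mul {x q M E : ℝ} (hq : 2 ≤ q) (hM : 0 ≤ M)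
    (hCS : x ^ 2 ≤ M * E) (hE : (q - 1) * E ≤ x * (q - 1 + (x - 1))) :
    1 / 2 * min x q ≤ M := by
  rcases le_or_gt x 0 with hx | hx
  · linarith [min_le_left x q]
  have key : (q - 1) * x ≤ M * (q - 2 + x) := by
    refine le_of_mul_le_mul_left ?_ hx
    nlinarith [mul_le_mul_of_nonneg_left hE hM,
      mul_le_mul_of_nonneg_left hCS (by linarith : 0 ≤ q - 1)]
  rcases le_total x q with hxq | hqx
  · rw [min_eq_left hxq]
    nlinarith [mul_le_mul_of_nonneg_left hxq hM]
  · rw [min_eq_right hqx]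
    nlinarith [mul_nonneg (sub_nonneg.2 hqx) (sub_nonneg.2 hq)]

theorem ZMod.exists_sub_one_mem_and_notMem {n : ℕ} [NeZero n] {S : Set (ZMod n)} (h0 : 0 ∈ S)
    (hS : S ≠ Set.univ) : ∃ ξ, ξ - 1 ∈ S ∧ ξ ∉ S := by
  by_contra! h
  have hnat : ∀ k : ℕ, (k : ZMod n) ∈ S := by
    intro k
    induction k with
    | zero => simpa using h0
    | succ k ih => exact h _ (by simpa using ih)
  exact hS (Set.eq_univ_of_forall fun ξ => ZMod.natCast_zmod_val ξ ▸ hnat ξ.val)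

section Field

variable {F : Type*} [Field F] [DecidableEq F] {A : Finset F}

def quotientSet (A : Finset F) : Set F :=
  {ξ | ∃ a ∈ A, ∃ b ∈ A, ∃ c ∈ A, ∃ d ∈ A, c ≠ d ∧ ξ * (c - d) = a - b}

theorem smul_add_smul_add_smul_subset {a b c d e f : F} (ha : a ∈ A) (hb : b ∈ A)
    (hc : c ∈ A) (hd : d ∈ A) (he : e ∈ A) (hf : f ∈ A) :
    (a - b) • A + (c - d) • A + (e - f) • A ⊆
      (A * A + A * A + A * A) - (A * A + A * A + A * A) := by
  intro z hz
  simp only [mem_add, mem_smul_finset, smul_eq_mul] at hz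
  obtain ⟨_, ⟨_, ⟨x, hx, rfl⟩, _, ⟨y, hy, rfl⟩, rfl⟩, _, ⟨w, hw, rfl⟩, rfl⟩ := hz
  exact mem_sub.2 ⟨a * x + c * y + e * w,
    add_mem_add (add_mem_add (mul_mem_mul ha hx) (mul_mem_mul hc hy)) (mul_mem_mul he hw),
    b * x + d * y + f * w,
    add_mem_add (add_mem_add (mul_mem_mul hb hx) (mul_mem_mul hd hy)) (mul_mem_mul hf hw),
    by ring⟩

theorem card_add_smul_add_le_of_mem_quotientSet {ξ : F} (hξ : ξ ∈ quotientSet A) :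
    #(A + ξ • A + A) ≤ #((A * A + A * A + A * A) - (A * A + A * A + A * A)) := by
  obtain ⟨a, ha, b, hb, c, hc, d, hd, hcd, hξ⟩ := hξ
  calc #(A + ξ • A + A) = #((c - d) • (A + ξ • A + A)) :=
        (card_smul_finset₀ (sub_ne_zero.2 hcd) _).symm
    _ = #((c - d) • A + (a - b) • A + (c - d) • A) := by
        rw [smul_add, smul_add, smul_smul, mul_comm, hξ]
    _ ≤ _ := card_le_card (smul_add_smul_add_smul_subset hc hd ha hb hc hd)

theorem sq_card_le_card_add_smul_of_notMem_quotientSet {ξ : F} (hξ : ξ ∉ quotientSet A) :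
    #A ^ 2 ≤ #(A + ξ • A) := by
  have hinj : Set.InjOn (fun x : F × F => x.1 + ξ * x.2) (A ×ˢ A : Finset (F × F)) := by
    rintro ⟨a, d⟩ had ⟨b, c⟩ hbc h
    simp only [coe_product, Set.mem_prod, mem_coe] at had hbc h
    by_cases hcd : c = d
    · subst hcd
      simpa using h
    · exact absurd ⟨a, had.1, b, hbc.1, c, hbc.2, d, had.2, hcd, by linear_combination -h⟩ hξ
  calc #A ^ 2 = #((A ×ˢ A).image fun x : F × F => x.1 + ξ * x.2) := by
        rw [card_image_of_injOn hinj, card_product, sq]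
    _ ≤ #(A + ξ • A) := card_le_card <| image_subset_iff.2 fun x hx =>
        add_mem_add (mem_product.1 hx).1 (smul_mem_smul_finset (mem_product.1 hx).2)

theorem add_smul_subset_add_sub_one_smul_add (A : Finset F) (ξ : F) :
    A + ξ • A ⊆ A + (ξ - 1) • A + A := by
  intro z hz
  obtain ⟨x, hx, _, hy', rfl⟩ := mem_add.1 hz
  obtain ⟨y, hy, rfl⟩ := mem_smul_finset.1 hy'
  exact mem_add.2 ⟨x + (ξ - 1) • y, add_mem_add hx (smul_mem_smul_finset hy), y, hy, by
    simp only [smul_eq_mul]; ring⟩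

theorem eq_of_add_mul_eq_of_add_mul_eq {x y : F × F} (hxy : x ≠ y) {u v : F}
    (hu : x.1 + u * x.2 = y.1 + u * y.2) (hv : x.1 + v * x.2 = y.1 + v * y.2) : u = v := by
  obtain ⟨a, b⟩ := x
  obtain ⟨c, d⟩ := y
  by_cases hbd : b = d
  · subst hbd
    exact absurd (by simpa using hu) hxy
  · exact mul_left_cancel₀ (sub_ne_zero.2 hbd) (by linear_combination hu - hv)

theorem addEnergy_smul_eq_card_filter {u : F} (hu : u ≠ 0) (A : Finset F) :
    E[A, u • A] = #{xy ∈ (A ×ˢ A) ×ˢ (A ×ˢ A) | xy.1.1 + u * xy.1.2 = xy.2.1 + u * xy.2.2} := by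
  rw [addEnergy_eq_card_filter]
  refine card_nbij' (fun xy => ((xy.1.1, u⁻¹ * xy.1.2), (xy.2.1, u⁻¹ * xy.2.2)))
    (fun xy => ((xy.1.1, u * xy.1.2), (xy.2.1, u * xy.2.2))) ?_ ?_ ?_ ?_ <;>
    rintro ⟨⟨a, b⟩, c, d⟩ <;> simp [mem_smul_finset, hu]
  rintro ha b hb rfl hc d hd rfl h
  simp [*]

variable [Fintype F]

theorem exists_addEnergy_smul_le (A : Finset F) :
    ∃ u : F, u ≠ 0 ∧ (Fintype.card F - 1) * E[A, u • A] ≤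
      #A ^ 2 * (Fintype.card F - 1 + (#A ^ 2 - 1)) := by
  have hcard : #(univ.erase (0 : F)) = Fintype.card F - 1 := by
    rw [card_erase_of_mem (mem_univ _), card_univ]
  obtain ⟨u, hu, hmin⟩ := exists_min_image (univ.erase (0 : F)) (fun u => E[A, u • A]) ⟨1, by simp⟩
  refine ⟨u, ne_of_mem_erase hu, ?_⟩
  calc (Fintype.card F - 1) * E[A, u • A] = #(univ.erase (0 : F)) • E[A, u • A] := by
        rw [hcard, smul_eq_mul]
    _ ≤ ∑ v ∈ univ.erase (0 : F), E[A, v • A] := card_nsmul_le_sum _ _ _ hmin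
    _ = ∑ v ∈ univ.erase (0 : F),
          #{xy ∈ (A ×ˢ A) ×ˢ (A ×ˢ A) | xy.1.1 + v * xy.1.2 = xy.2.1 + v * xy.2.2} :=
        sum_congr rfl fun v hv => addEnergy_smul_eq_card_filter (ne_of_mem_erase hv) A
    _ ≤ #(A ×ˢ A) * (#(univ.erase (0 : F)) + (#(A ×ˢ A) - 1)) :=
        sum_card_collisions_le _ (A ×ˢ A) (fun v x => x.1 + v * x.2) fun x _ y _ hxy => by
          refine card_le_one.2 fun _ hu _ hv => ?_
          simp only [mem_filter] at hu hv
          exact eq_of_add_mul_eq_of_add_mul_eq hxy hu.2 hv.2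
    _ = #A ^ 2 * (Fintype.card F - 1 + (#A ^ 2 - 1)) := by rw [card_product, hcard, sq]

theorem half_min_le_card_of_quotientSet_eq_univ (hQ : quotientSet A = Set.univ) :
    1 / 2 * min ((#A : ℝ) ^ 2) (Fintype.card F) ≤
      #((A * A + A * A + A * A) - (A * A + A * A + A * A)) := by
  obtain ⟨u, hu, hE⟩ := exists_addEnergy_smul_le A
  have huQ : u ∈ quotientSet A := hQ ▸ Set.mem_univ u
  have hA : A.Nonempty := by
    obtain ⟨a, ha, -⟩ := huQ
    exact ⟨a, ha⟩
  have hN : 1 ≤ #A ^ 2 := Nat.one_le_pow _ _ hA.card_pos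
  have hq : 2 ≤ Fintype.card F := Fintype.one_lt_card
  have hCS := le_card_add_mul_addEnergy A (u • A)
  rw [card_smul_finset₀ hu, ← sq] at hCS
  have hsub : #(A + u • A) ≤ #((A * A + A * A + A * A) - (A * A + A * A + A * A)) :=
    (card_le_card_add_right hA).trans (card_add_smul_add_le_of_mem_quotientSet huQ)
  refine (half_min_le_of_sq_le_mul (E := E[A, u • A]) (by exact_mod_cast hq)
    (Nat.cast_nonneg _) ?_ ?_).trans (Nat.cast_le.2 hsub)
  · exact_mod_cast hCS
  · have := (Nat.cast_le (α := ℝ)).2 hE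
    push_cast [Nat.cast_sub (one_le_two.trans hq), Nat.cast_sub hN] at this
    exact this

end Field

theorem sq_card_le_of_quotientSet_ne_univ {p : ℕ} [Fact p.Prime] {A : Finset (ZMod p)}
    (hQ : quotientSet A ≠ Set.univ) :
    #A ^ 2 ≤ #((A * A + A * A + A * A) - (A * A + A * A + A * A)) := by
  rcases le_or_gt #A 1 with hA | hA
  · rcases A.eq_empty_or_nonempty with rfl | hne
    · simp
    have h3 := ((hne.mul hne).add (hne.mul hne)).add (hne.mul hne)
    exact (pow_le_one₀ (Nat.zero_le _) hA).trans (h3.sub h3).card_pos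
  obtain ⟨c, hc, d, hd, hcd⟩ := one_lt_card.1 hA
  have h0 : (0 : ZMod p) ∈ quotientSet A := ⟨c, hc, c, hc, c, hc, d, hd, hcd, by ring⟩
  obtain ⟨ξ, hξ1, hξ⟩ := ZMod.exists_sub_one_mem_and_notMem h0 hQ
  calc #A ^ 2 ≤ #(A + ξ • A) := sq_card_le_card_add_smul_of_notMem_quotientSet hξ
    _ ≤ #(A + (ξ - 1) • A + A) := card_le_card (add_smul_subset_add_sub_one_smul_add A ξ)
    _ ≤ _ := card_add_smul_add_le_of_mem_quotientSet hξ1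

theorem stmt_1_general (p : ℕ) (hp : p.Prime) (A : Finset (ZMod p)) :
    (1 / 2 : ℝ) * min ((A.card : ℝ) ^ 2) (p : ℝ) ≤
      (((A * A + A * A + A * A) - (A * A + A * A + A * A)).card : ℝ) := by
  have := Fact.mk hp
  by_cases hQ : quotientSet A = Set.univ
  · simpa [ZMod.card] using half_min_le_card_of_quotientSet_eq_univ hQ
  · calc 1 / 2 * min ((#A : ℝ) ^ 2) p ≤ (#A : ℝ) ^ 2 := by
          linarith [min_le_left ((#A : ℝ) ^ 2) p, sq_nonneg (#A : ℝ)]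
      _ ≤ _ := by exact_mod_cast sq_card_le_of_quotientSet_ne_univ hQ

theorem stmt_1 (p : ℕ) (hp : p.Prime) (A : Finset (ZMod p)) (hA : A.Nonempty) :
    (1 / 2 : ℝ) * min ((A.card : ℝ) ^ 2) (p : ℝ) ≤
      (((A * A + A * A + A * A) - (A * A + A * A + A * A)).card : ℝ) :=
  stmt_1_general p hp A
end

section
/- For every δ with 0 < δ < 1 there is an integer k = k(δ) such that: for every prime p and every set A ⊆ F_p with |A| ≥ p^δ, one has kA^k − kA^k = F_p (every element of F_p is a sum of k products of k elements of A minus another such sum). -/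
open Finset
open scoped Pointwise

/-- The `k`-fold iterated sumset `A + A + ⋯ + A` (`k` copies). -/
def ksum {G : Type*} [AddCommMonoid G] [DecidableEq G] : ℕ → Finset G → Finset G
  | 0, _ => {0}
  | n + 1, A => A + ksum n A

/-!
Write `S(n, d) = nA^d - nA^d`. These sets are closed under negation and addition, and
`S(n₁, d₁) S(n₂, d₂) ⊆ S(2n₁n₂, d₁ + d₂)`; so for `a, b, c, e, x, y ∈ X ⊆ S(n, d)` the elements
`(c - e) x + ((c - e) + (a - b)) y = (c - e) (x + ζ y)`, with `ζ = 1 + (a - b)/(c - e)`, lie in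
`S(12n², 2d)`. In `𝔽_p` there is such a `ζ` for which `x + ζ y` takes at least
`|X|² - |X|⁴/p` values: if the ratio set `(X - X)/(X - X)` is all of `𝔽_p`, average the number
of coincidences over `ζ`; otherwise walk along `0, 1, 2, …` to some `ξ` in the ratio set with
`ξ + 1` outside it, and `ζ = ξ + 1` has no coincidences at all. Hence `|X|` roughly squares at
each step while `4|X|² ≤ p`. Starting from `X = A - A`, the bound `|A| ≥ p^δ` allows only about
`log₂(1/δ)` such steps; one more step, applied to a suitable subset of `X`, gives a set of
size `> p/8`, and by Cauchy–Davenport twelve copies of it fill `𝔽_p`. Multiplying by a power of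
a nonzero `a ∈ A` and adding `0 ∈ S(m, d)` raises both indices to `k`. For `p ≤ k`, with `a ≠ 0`
and `b ≠ a` in `A`, every `x` is `i (a^k - a^(k-1) b)` for some `i < p ≤ k`.
-/

theorem ksum_eq_nsmul {G : Type*} [AddCommMonoid G] [DecidableEq G] (n : ℕ) (A : Finset G) :
    ksum n A = n • A := by
  induction n with
  | zero => rfl
  | succ n ih => rw [ksum, ih, succ_nsmul']

section Pointwise

variable {R : Type*} [CommRing R] [DecidableEq R]

theorem Finset.nsmul_mul_subset (n : ℕ) (s t : Finset R) : n • s * t ⊆ n • (s * t) := by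
  induction n with
  | zero => simpa using zero_mul_subset t
  | succ n ih =>
    rw [succ_nsmul, succ_nsmul]
    exact (add_mul_subset _ _ _).trans (add_subset_add_right ih)

theorem Finset.nsmul_mul_nsmul_subset (m n : ℕ) (s t : Finset R) :
    m • s * n • t ⊆ (m * n) • (s * t) := by
  calc m • s * n • t ⊆ m • (s * n • t) := nsmul_mul_subset m s (n • t)
    _ = m • (n • t * s) := by rw [mul_comm]
    _ ⊆ m • (n • (t * s)) := nsmul_subset_nsmul_left (nsmul_mul_subset n t s)
    _ = (m * n) • (s * t) := by rw [mul_comm t, mul_nsmul']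

theorem nsmul_add_nsmul_mem_nsmul {T : Finset R} {y z : R} {i k : ℕ} (hy : y ∈ T) (hz : z ∈ T)
    (hik : i ≤ k) : i • y + (k - i) • z ∈ k • T := by
  have : k • T = i • T + (k - i) • T := by rw [← add_nsmul, Nat.add_sub_cancel' hik]
  rw [this]
  exact add_mem_add (nsmul_mem_nsmul hy) (nsmul_mem_nsmul hz)

end Pointwise

section SumProdDiff

variable {R : Type*} [CommRing R] [DecidableEq R] {A : Finset R} {x y : R}
  {m n n₁ n₂ d d₁ d₂ : ℕ}

def sumProdDiff (A : Finset R) (n d : ℕ) : Finset R := n • A ^ d - n • A ^ d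

theorem nsmul_sumProdDiff (m n d : ℕ) : m • sumProdDiff A n d = sumProdDiff A (m * n) d := by
  rw [sumProdDiff, sumProdDiff, nsmul_sub, mul_nsmul']

theorem sumProdDiff_add_sumProdDiff (n₁ n₂ d : ℕ) :
    sumProdDiff A n₁ d + sumProdDiff A n₂ d = sumProdDiff A (n₁ + n₂) d := by
  rw [sumProdDiff, sumProdDiff, sumProdDiff, sub_add_sub_comm, add_nsmul]

theorem add_mem_sumProdDiff (hx : x ∈ sumProdDiff A n₁ d) (hy : y ∈ sumProdDiff A n₂ d) :
    x + y ∈ sumProdDiff A (n₁ + n₂) d :=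
  sumProdDiff_add_sumProdDiff (A := A) n₁ n₂ d ▸ add_mem_add hx hy

theorem neg_mem_sumProdDiff (hx : x ∈ sumProdDiff A n d) : -x ∈ sumProdDiff A n d := by
  simpa [sumProdDiff, neg_sub] using neg_mem_neg hx

theorem sub_mem_sumProdDiff (hx : x ∈ sumProdDiff A n₁ d) (hy : y ∈ sumProdDiff A n₂ d) :
    x - y ∈ sumProdDiff A (n₁ + n₂) d :=
  sub_eq_add_neg x y ▸ add_mem_sumProdDiff hx (neg_mem_sumProdDiff hy)

theorem mul_mem_sumProdDiff (hx : x ∈ sumProdDiff A n₁ d₁) (hy : y ∈ sumProdDiff A n₂ d₂) :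
    x * y ∈ sumProdDiff A (2 * (n₁ * n₂)) (d₁ + d₂) := by
  obtain ⟨s, hs, t, ht, rfl⟩ := mem_sub.1 hx
  obtain ⟨u, hu, v, hv, rfl⟩ := mem_sub.1 hy
  have hmul : ∀ a ∈ n₁ • A ^ d₁, ∀ b ∈ n₂ • A ^ d₂, a * b ∈ (n₁ * n₂) • A ^ (d₁ + d₂) :=
    fun a ha b hb => pow_add A d₁ d₂ ▸ nsmul_mul_nsmul_subset _ _ _ _ (mul_mem_mul ha hb)
  have hsum : ∀ a ∈ (n₁ * n₂) • A ^ (d₁ + d₂), ∀ b ∈ (n₁ * n₂) • A ^ (d₁ + d₂),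
      a + b ∈ (2 * (n₁ * n₂)) • A ^ (d₁ + d₂) :=
    fun a ha b hb => by rw [two_mul, add_nsmul]; exact add_mem_add ha hb
  rw [show (s - t) * (u - v) = (s * u + t * v) - (s * v + t * u) by ring]
  exact sub_mem_sub (hsum _ (hmul s hs u hu) _ (hmul t ht v hv))
    (hsum _ (hmul s hs v hv) _ (hmul t ht u hu))

theorem mul_pow_mem_sumProdDiff (hx : x ∈ sumProdDiff A n d) {a : R} (ha : a ∈ A) (e : ℕ) :
    x * a ^ e ∈ sumProdDiff A n (d + e) := by
  obtain ⟨s, hs, t, ht, rfl⟩ := mem_sub.1 hx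
  have hmul : ∀ b ∈ n • A ^ d, b * a ^ e ∈ n • A ^ (d + e) := fun b hb =>
    pow_add A d e ▸ nsmul_mul_subset n _ _ (mul_mem_mul hb (pow_mem_pow ha : a ^ e ∈ A ^ e))
  rw [sub_mul]
  exact sub_mem_sub (hmul s hs) (hmul t ht)

theorem sumProdDiff_subset_add (hA : A.Nonempty) :
    sumProdDiff A n d ⊆ sumProdDiff A (n + m) d := by
  obtain ⟨s, hs⟩ : (m • A ^ d).Nonempty := hA.pow.nsmul
  rw [← sumProdDiff_add_sumProdDiff]
  exact subset_add_left _ (sub_self s ▸ sub_mem_sub hs hs)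

theorem sumProdDiff_eq_univ_of_le {F : Type*} [Field F] [Fintype F] [DecidableEq F]
    {A : Finset F} {k : ℕ} (h : sumProdDiff A n d = univ) {a : F} (ha : a ∈ A) (ha0 : a ≠ 0)
    (hn : n ≤ k) (hd : d ≤ k) : sumProdDiff A k k = univ := by
  refine eq_univ_of_forall fun x => ?_
  have hx := mul_pow_mem_sumProdDiff (h ▸ mem_univ (x / a ^ (k - d))) ha (k - d)
  rw [div_mul_cancel₀ _ (pow_ne_zero _ ha0), Nat.add_sub_cancel' hd] at hx
  obtain ⟨m, rfl⟩ := Nat.exists_eq_add_of_le hn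
  exact sumProdDiff_subset_add ⟨a, ha⟩ hx

theorem mul_add_mul_mem_sumProdDiff {a b c e : R} (ha : a ∈ sumProdDiff A n d)
    (hb : b ∈ sumProdDiff A n d) (hc : c ∈ sumProdDiff A n d) (he : e ∈ sumProdDiff A n d)
    (hx : x ∈ sumProdDiff A n d) (hy : y ∈ sumProdDiff A n d) :
    (c - e) * x + ((c - e) + (a - b)) * y ∈ sumProdDiff A (12 * n ^ 2) (2 * d) := by
  have hce := sub_mem_sumProdDiff hc he
  have := add_mem_sumProdDiff (mul_mem_sumProdDiff hce hx)
    (mul_mem_sumProdDiff (add_mem_sumProdDiff hce (sub_mem_sumProdDiff ha hb)) hy)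
  convert this using 2 <;> ring

/-- the bounds are those of `n ↦ 12 n²`, `d ↦ 2d` iterated `i` times from `n = d = 1` -/
def Reachable (A : Finset R) (i : ℕ) (X : Finset R) : Prop :=
  ∃ n d, X ⊆ sumProdDiff A n d ∧ 12 * n ≤ 12 ^ 2 ^ i ∧ d ≤ 2 ^ i

theorem reachable_sub_self (A : Finset R) : Reachable A 0 (A - A) :=
  ⟨1, 1, by simp [sumProdDiff], by norm_num, le_rfl⟩

theorem Reachable.mono {i j : ℕ} {X : Finset R} (h : Reachable A i X) (hij : i ≤ j) :
    Reachable A j X := by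
  obtain ⟨n, d, hX, hn, hd⟩ := h
  have := Nat.pow_le_pow_right two_pos hij
  exact ⟨n, d, hX, hn.trans (Nat.pow_le_pow_right (by norm_num) this), hd.trans this⟩

theorem Reachable.nsmul {i : ℕ} {X : Finset R} (h : Reachable A i X) :
    Reachable A (i + 1) (12 • X) := by
  obtain ⟨n, d, hX, hn, hd⟩ := h
  refine ⟨12 * n, d, nsmul_sumProdDiff (A := A) 12 n d ▸ nsmul_subset_nsmul_left hX, ?_,
    hd.trans (Nat.pow_le_pow_right two_pos i.le_succ)⟩
  have : 12 ≤ 12 ^ 2 ^ i := Nat.le_self_pow (pow_ne_zero i two_ne_zero) 12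
  rw [pow_succ, pow_mul, sq]
  exact Nat.mul_le_mul this hn

end SumProdDiff

section Collisions

variable {α β : Type*} [DecidableEq α] [DecidableEq β]

def collisions (s : Finset α) (f : α → β) : Finset (α × α) :=
  (s ×ˢ s).filter fun q => q.1 ≠ q.2 ∧ f q.1 = f q.2

theorem card_le_card_image_add_card_collisions (s : Finset α) (f : α → β) :
    #s ≤ #(s.image f) + #(collisions s f) := by
  set B := (collisions s f).image Prod.fst
  have hinj : Set.InjOn f ↑(s \ B) := by
    intro x hx y hy hxy
    by_contra hne
    simp only [mem_coe, mem_sdiff] at hx hy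
    exact hx.2 (mem_image.2 ⟨(x, y), by simp [collisions, hx.1, hy.1, hne, hxy], rfl⟩)
  calc #s ≤ #(s \ B) + #B := card_le_card_sdiff_add_card
    _ = #((s \ B).image f) + #B := by rw [card_image_of_injOn hinj]
    _ ≤ #(s.image f) + #(collisions s f) :=
      add_le_add (card_le_card (image_subset_image sdiff_subset)) card_image_le

end Collisions

section Lines

variable {K : Type*} [Field K]

theorem eq_div_of_add_mul_eq {q₁ q₂ : K × K} {ζ : K} (hne : q₁ ≠ q₂)
    (h : q₁.1 + ζ * q₁.2 = q₂.1 + ζ * q₂.2) : q₁.2 ≠ q₂.2 ∧ ζ = (q₂.1 - q₁.1) / (q₁.2 - q₂.2) := by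
  have h2 : q₁.2 ≠ q₂.2 := fun h2 => hne (Prod.ext (by rw [h2] at h; exact add_right_cancel h) h2)
  refine ⟨h2, (eq_div_iff (sub_ne_zero.2 h2)).2 ?_⟩
  linear_combination h

theorem sum_card_collisions_le_s2 [Fintype K] [DecidableEq K] (s : Finset (K × K)) :
    ∑ ζ : K, #(collisions s fun q => q.1 + ζ * q.2) ≤ #s ^ 2 := by
  let r : K → (K × K) × (K × K) → Prop := fun ζ q =>
    q.1 ≠ q.2 ∧ q.1.1 + ζ * q.1.2 = q.2.1 + ζ * q.2.2
  have hle : ∀ q ∈ s ×ˢ s, #(univ.bipartiteBelow r q) ≤ 1 := fun q _ =>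
    card_le_one.2 fun ζ hζ ζ' hζ' => by
      simp only [bipartiteBelow, mem_filter, r] at hζ hζ'
      rw [(eq_div_of_add_mul_eq hζ.2.1 hζ.2.2).2, (eq_div_of_add_mul_eq hζ'.2.1 hζ'.2.2).2]
  calc ∑ ζ : K, #(collisions s fun q => q.1 + ζ * q.2)
      = ∑ ζ : K, #((s ×ˢ s).bipartiteAbove r ζ) := rfl
    _ = ∑ q ∈ s ×ˢ s, #(univ.bipartiteBelow r q) :=
      sum_card_bipartiteAbove_eq_sum_card_bipartiteBelow r
    _ ≤ #(s ×ˢ s) • 1 := sum_le_card_nsmul _ _ 1 hle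
    _ = #s ^ 2 := by rw [card_product, smul_eq_mul, mul_one, sq]

theorem exists_card_mul_card_collisions_le [Fintype K] [DecidableEq K] (s : Finset (K × K)) :
    ∃ ζ : K, Fintype.card K * #(collisions s fun q => q.1 + ζ * q.2) ≤ #s ^ 2 := by
  obtain ⟨ζ, -, hζ⟩ := exists_le_of_sum_le (univ_nonempty (α := K))
    (f := fun ζ => Fintype.card K * #(collisions s fun q => q.1 + ζ * q.2))
    (g := fun _ => #s ^ 2) (by
      rw [← mul_sum, sum_const, card_univ, smul_eq_mul]
      exact Nat.mul_le_mul_left _ (sum_card_collisions_le_s2 s))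
  exact ⟨ζ, hζ⟩

end Lines

namespace ZMod

variable {p : ℕ}

theorem exists_mem_add_one_notMem [NeZero p] {S : Finset (ZMod p)} (h0 : 0 ∈ S)
    (hS : S ≠ univ) : ∃ ξ ∈ S, ξ + 1 ∉ S := by
  by_contra! h
  have hnat : ∀ n : ℕ, (n : ZMod p) ∈ S := fun n => by
    induction n with
    | zero => simpa using h0
    | succ n ih => simpa using h _ ih
  exact hS (eq_univ_of_forall fun z => natCast_zmod_val z ▸ hnat z.val)

theorem min_le_card_nsmul (hp : p.Prime) {s : Finset (ZMod p)} (hs : s.Nonempty) (n : ℕ) :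
    min p (n * (#s - 1) + 1) ≤ #(n • s) := by
  induction n with
  | zero => simp
  | succ n ih =>
    have := cauchy_davenport hp (hs.nsmul (n := n)) hs
    rw [succ_nsmul]
    have := hs.card_pos
    rw [add_mul, one_mul]
    omega

theorem nsmul_eq_univ [Fact p.Prime] {s : Finset (ZMod p)} (hs : s.Nonempty) {n : ℕ}
    (h : p ≤ n * (#s - 1) + 1) : n • s = univ := by
  have := min_le_card_nsmul Fact.out hs n
  refine eq_univ_of_card _ (le_antisymm (card_le_univ _) ?_)
  rw [card] at *
  omega

end ZMod

section PrimeField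

variable {p : ℕ} [Fact p.Prime]

theorem ZMod.exists_card_image_add_mul_ge (X Y : Finset (ZMod p)) (hX : X.Nonempty)
    (hY : 1 < #Y) : ∃ ζ, ζ - 1 ∈ (X - X) / ((Y - Y).erase 0) ∧
      p * #(X ×ˢ Y) ≤ p * #((X ×ˢ Y).image fun q => q.1 + ζ * q.2) + #(X ×ˢ Y) ^ 2 := by
  set R := (X - X) / ((Y - Y).erase 0)
  suffices ∃ ζ, ζ - 1 ∈ R ∧ p * #(collisions (X ×ˢ Y) fun q => q.1 + ζ * q.2) ≤ #(X ×ˢ Y) ^ 2 by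
    obtain ⟨ζ, hζ, hcoll⟩ := this
    refine ⟨ζ, hζ, ?_⟩
    have := Nat.mul_le_mul_left p
      (card_le_card_image_add_card_collisions (X ×ˢ Y) fun q => q.1 + ζ * q.2)
    rw [mul_add] at this
    omega
  have mem_R : ∀ a ∈ X, ∀ b ∈ X, ∀ c ∈ Y, ∀ d ∈ Y, c ≠ d → (a - b) / (c - d) ∈ R :=
    fun a ha b hb c hc d hd hcd => div_mem_div (sub_mem_sub ha hb)
      (mem_erase.2 ⟨sub_ne_zero.2 hcd, sub_mem_sub hc hd⟩)
  by_cases hR : R = univ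
  · obtain ⟨ζ, hζ⟩ := exists_card_mul_card_collisions_le (X ×ˢ Y)
    exact ⟨ζ, hR ▸ mem_univ _, by rwa [card] at hζ⟩
  -- a collision of `x + (ξ + 1) y` would put `ξ + 1` in `R`
  obtain ⟨a, ha⟩ := hX
  obtain ⟨c, hc, d, hd, hcd⟩ := one_lt_card.1 hY
  obtain ⟨ξ, hξ, hξ1⟩ := exists_mem_add_one_notMem (by simpa using mem_R a ha a ha c hc d hd hcd) hR
  refine ⟨ξ + 1, by simpa using hξ, ?_⟩
  suffices collisions (X ×ˢ Y) (fun q => q.1 + (ξ + 1) * q.2) = ∅ by simp [this]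
  refine filter_eq_empty_iff.2 fun q hq hcoll => hξ1 ?_
  simp only [mem_product] at hq
  obtain ⟨⟨hx₁, hy₁⟩, hx₂, hy₂⟩ := hq
  obtain ⟨hy, hζ⟩ := eq_div_of_add_mul_eq hcoll.1 hcoll.2
  exact hζ ▸ mem_R _ hx₂ _ hx₁ _ hy₁ _ hy₂ hy

variable {A : Finset (ZMod p)}

theorem Reachable.exists_succ_card_ge {i t : ℕ} {X : Finset (ZMod p)} (hX : Reachable A i X)
    (ht : 2 ≤ t) (htX : t ≤ #X) (hp : 4 * (#X * t) ≤ p) :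
    ∃ W, Reachable A (i + 1) W ∧ 3 * (#X * t) ≤ 4 * #W := by
  obtain ⟨n, d, hXS, hn, hd⟩ := hX
  obtain ⟨Y, hYX, rfl⟩ := exists_subset_card_eq htX
  obtain ⟨ζ, hζ, hcard⟩ :=
    ZMod.exists_card_image_add_mul_ge X Y (card_pos.1 (by omega)) (by omega)
  obtain ⟨u, hu, v, hv, huv⟩ := mem_div.1 hζ
  obtain ⟨hv0, hv⟩ := mem_erase.1 hv
  obtain ⟨a, ha, b, hb, rfl⟩ := mem_sub.1 hu
  obtain ⟨c, hc, e, he, rfl⟩ := mem_sub.1 hv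
  set W := (X ×ˢ Y).image fun q => q.1 + ζ * q.2
  refine ⟨W.image ((c - e) * ·), ⟨12 * n ^ 2, 2 * d, ?_, ?_, ?_⟩, ?_⟩
  · have hζ' : (c - e) * ζ = (c - e) + (a - b) := by
      rw [← sub_add_cancel ζ 1, ← huv, mul_add, mul_div_cancel₀ _ hv0, mul_one, add_comm]
    intro w hw
    obtain ⟨z, hz, rfl⟩ := mem_image.1 hw
    obtain ⟨q, hq, rfl⟩ := mem_image.1 hz
    obtain ⟨hq₁, hq₂⟩ := mem_product.1 hq
    rw [show (c - e) * (q.1 + ζ * q.2) = (c - e) * q.1 + ((c - e) * ζ) * q.2 by ring, hζ']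
    exact mul_add_mul_mem_sumProdDiff (hXS ha) (hXS hb) (hXS (hYX hc)) (hXS (hYX he)) (hXS hq₁)
      (hXS (hYX hq₂))
  · calc 12 * (12 * n ^ 2) = (12 * n) ^ 2 := by ring
      _ ≤ (12 ^ 2 ^ i) ^ 2 := Nat.pow_le_pow_left hn 2
      _ = 12 ^ 2 ^ (i + 1) := by rw [← pow_mul, pow_succ]
  · rw [pow_succ]; omega
  · rw [card_image_of_injective _ (mul_right_injective₀ hv0)]
    rw [card_product] at hcard
    nlinarith

theorem Reachable.exists_large {X₀ : Finset (ZMod p)} (hX₀ : Reachable A 0 X₀) (h2 : 2 ≤ #X₀)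
    (i : ℕ) : ∃ X, Reachable A i X ∧ 2 ≤ #X ∧
      -- the second alternative says `|X| / 2 ≥ (|X₀| / 2) ^ 2 ^ i`
      (p < 4 * #X ^ 2 ∨ 2 * #X₀ ^ 2 ^ i ≤ 2 ^ 2 ^ i * #X) := by
  induction i with
  | zero => exact ⟨X₀, hX₀, h2, Or.inr (by simp)⟩
  | succ i ih =>
    obtain ⟨X, hX, hX2, hXlarge⟩ := ih
    by_cases hp : p < 4 * #X ^ 2
    · exact ⟨X, hX.mono i.le_succ, hX2, Or.inl hp⟩
    obtain ⟨W, hW, hXW⟩ := hX.exists_succ_card_ge hX2 le_rfl (by nlinarith)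
    refine ⟨W, hW, by nlinarith, Or.inr ?_⟩
    have hsq := Nat.pow_le_pow_left (hXlarge.resolve_left hp) 2
    have hW2 := Nat.mul_le_mul_left ((2 ^ 2 ^ i) ^ 2) (by nlinarith : #X ^ 2 ≤ 2 * #W)
    rw [pow_succ 2 i, pow_mul, pow_mul]
    nlinarith

theorem Reachable.exists_sq_gt {X₀ : Finset (ZMod p)} (hX₀ : Reachable A 0 X₀) (h4 : 4 ≤ #X₀)
    {J : ℕ} (hp : p ≤ #X₀ ^ 2 ^ J) : ∃ X, Reachable A (J + 1) X ∧ p < 4 * #X ^ 2 := by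
  obtain ⟨X, hX, -, hlarge⟩ := hX₀.exists_large (by omega) (J + 1)
  refine ⟨X, hX, hlarge.resolve_right fun h => ?_⟩
  have hXp : #X ≤ p := (card_le_univ X).trans_eq (ZMod.card p)
  have h4K : 2 ^ 2 ^ (J + 1) ≤ #X₀ ^ 2 ^ J := by
    rw [pow_succ', pow_mul]
    exact Nat.pow_le_pow_left (by omega) _
  have hsq : #X₀ ^ 2 ^ (J + 1) = #X₀ ^ 2 ^ J * #X₀ ^ 2 ^ J := by rw [pow_succ, pow_mul, sq]
  have hpos : 0 < #X₀ ^ 2 ^ J * #X₀ ^ 2 ^ J := by positivity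
  rw [hsq] at h
  linarith [Nat.mul_le_mul h4K hXp, Nat.mul_le_mul_left (#X₀ ^ 2 ^ J) hp]

theorem Reachable.exists_succ_lt_eight_mul {i : ℕ} {X : Finset (ZMod p)} (hX : Reachable A i X)
    (hXp : p < 4 * #X ^ 2) : ∃ X', Reachable A (i + 1) X' ∧ p < 8 * #X' := by
  have hX0 : 0 < #X := Nat.pos_of_ne_zero fun h => by simp [h] at hXp
  set t := p / (4 * #X)
  have hpt : p < 4 * #X * (t + 1) := Nat.lt_mul_div_succ p (by positivity)
  rcases lt_or_ge t 2 with ht | ht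
  · exact ⟨X, hX.mono i.le_succ, by nlinarith⟩
  have htX : t ≤ #X := Nat.div_le_of_le_mul (by nlinarith)
  obtain ⟨W, hW, hXW⟩ :=
    hX.exists_succ_card_ge ht htX (by rw [← mul_assoc]; exact Nat.mul_div_le p (4 * #X))
  exact ⟨W, hW, by nlinarith⟩

theorem mem_sumProdDiff_of_le (hA : 1 < #A) {k : ℕ} (hpk : p ≤ k) (x : ZMod p) :
    x ∈ sumProdDiff A k k := by
  obtain ⟨a, ha, ha0⟩ := exists_mem_ne hA 0
  obtain ⟨b, hb, hba⟩ := exists_mem_ne hA a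
  obtain ⟨m, rfl⟩ : ∃ m, k = m + 1 := ⟨k - 1, by have := (Fact.out : p.Prime).two_le; omega⟩
  have hc : a ^ m * (a - b) ≠ 0 := mul_ne_zero (pow_ne_zero _ ha0) (sub_ne_zero.2 hba.symm)
  set i := (x / (a ^ m * (a - b))).val
  have hx : x = i • (a ^ (m + 1) - a ^ m * b) := by
    rw [nsmul_eq_mul, ZMod.natCast_zmod_val, show a ^ (m + 1) - a ^ m * b = a ^ m * (a - b) by ring,
      div_mul_cancel₀ _ hc]
  have hi : i ≤ m + 1 := (ZMod.val_lt _).le.trans hpk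
  have hu : a ^ (m + 1) ∈ A ^ (m + 1) := pow_mem_pow ha
  have hv : a ^ m * b ∈ A ^ (m + 1) := pow_succ A m ▸ mul_mem_mul (pow_mem_pow ha) hb
  rw [hx, smul_sub, ← add_sub_add_right_eq_sub _ _ ((m + 1 - i) • a ^ (m + 1))]
  exact sub_mem_sub (nsmul_add_nsmul_mem_nsmul hu hu hi) (nsmul_add_nsmul_mem_nsmul hv hu hi)

theorem sumProdDiff_eq_univ_of_le_pow {J : ℕ} (hp : p ≤ #A ^ 2 ^ J) :
    sumProdDiff A (12 ^ 2 ^ (J + 3)) (12 ^ 2 ^ (J + 3)) = univ := by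
  have hp2 := (Fact.out : p.Prime).two_le
  have hA : ∀ c, #A ≤ c → p ≤ c ^ 2 ^ J := fun c hc => hp.trans (Nat.pow_le_pow_left hc _)
  have hk : 12 ^ 2 ^ J ≤ 12 ^ 2 ^ (J + 3) :=
    Nat.pow_le_pow_right (by norm_num) (by gcongr <;> omega)
  rcases le_or_gt p (12 ^ 2 ^ (J + 3)) with hpk | hkp
  · have hA1 : 1 < #A := by
      by_contra! h
      simpa using (hA 1 h).trans_lt' hp2
    exact eq_univ_of_forall (mem_sumProdDiff_of_le hA1 hpk)
  have hA4 : 4 ≤ #A := by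
    by_contra! h
    have := (hA 3 (by omega)).trans (Nat.pow_le_pow_left (by norm_num : 3 ≤ 12) _)
    omega
  have h19 : 19 ≤ p := by
    have : 12 ^ 2 ≤ 12 ^ 2 ^ (J + 3) :=
      Nat.pow_le_pow_right (by norm_num) (Nat.le_self_pow (by omega) 2)
    omega
  obtain ⟨X, hX, hXp⟩ := (reachable_sub_self A).exists_sq_gt (hA4.trans card_le_card_sub_self)
    (hp.trans (Nat.pow_le_pow_left card_le_card_sub_self _))
  obtain ⟨Y, hY, hYp⟩ := hX.exists_succ_lt_eight_mul hXp
  obtain ⟨n, d, hS, hn, hd⟩ : Reachable A (J + 3) (12 • Y) := hY.nsmul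
  rw [ZMod.nsmul_eq_univ (card_pos.1 (by omega)) (by omega), univ_subset_iff] at hS
  obtain ⟨a, ha, ha0⟩ := exists_mem_ne (by omega : 1 < #A) 0
  exact sumProdDiff_eq_univ_of_le hS ha ha0 (by omega) (hd.trans (Nat.lt_pow_self (by norm_num)).le)

end PrimeField

theorem le_pow_of_rpow_le {x y δ : ℝ} {m : ℕ} (hx : 1 ≤ x) (hxy : x ^ δ ≤ y) (hm : 1 ≤ δ * m) :
    x ≤ y ^ m :=
  calc x = x ^ (1 : ℝ) := (Real.rpow_one x).symm
    _ ≤ x ^ (δ * m) := Real.rpow_le_rpow_of_exponent_le hx hm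
    _ = (x ^ δ) ^ m := Real.rpow_mul_natCast (by linarith) _ _
    _ ≤ y ^ m := pow_le_pow_left₀ (Real.rpow_nonneg (by linarith) _) hxy m

theorem stmt_2_general (δ : ℝ) (hδ₀ : 0 < δ) :
    ∃ k : ℕ, 0 < k ∧ ∀ p : ℕ, p.Prime → ∀ A : Finset (ZMod p),
      (p : ℝ) ^ δ ≤ (A.card : ℝ) →
      ∀ x : ZMod p, x ∈ ksum k (A ^ k) - ksum k (A ^ k) := by
  obtain ⟨J, hJ⟩ := pow_unbounded_of_one_lt δ⁻¹ one_lt_two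
  have hδJ : 1 ≤ δ * (2 ^ J : ℕ) := by
    have := mul_lt_mul_of_pos_left hJ hδ₀
    rw [mul_inv_cancel₀ hδ₀.ne'] at this
    exact_mod_cast this.le
  refine ⟨12 ^ 2 ^ (J + 3), by positivity, fun p hp A hA x => ?_⟩
  have := Fact.mk hp
  have hpA : p ≤ #A ^ 2 ^ J := by
    exact_mod_cast le_pow_of_rpow_le (by exact_mod_cast hp.one_lt.le) hA hδJ
  rw [ksum_eq_nsmul, ← sumProdDiff, sumProdDiff_eq_univ_of_le_pow hpA]
  exact mem_univ x

theorem stmt_2 (δ : ℝ) (hδ₀ : 0 < δ) (hδ₁ : δ < 1) :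
    ∃ k : ℕ, 0 < k ∧ ∀ p : ℕ, p.Prime → ∀ A : Finset (ZMod p),
      (p : ℝ) ^ δ ≤ (A.card : ℝ) →
      ∀ x : ZMod p, x ∈ ksum k (A ^ k) - ksum k (A ^ k) :=
  stmt_2_general δ hδ₀
end

section
/- If H is a multiplicative subgroup of F_p^× with |H| ≥ p^δ (0 < δ < 1), then there exists k = k(δ) such that kH − kH = F_p, i.e. every element of F_p is a difference of two sums of k elements of H. -/
open Finset
open scoped Pointwise Classical

/-!
Write `D k = kA - kA`, where `A ⊆ 𝔽_p` has at least two elements and `A * A ⊆ A`. Then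
`D a + D b ⊆ D (a + b)` and `D a * D b ⊆ D (2ab)`. For `B = D k`, either every `θ` lies in the
quotient set `(B - B) / (B - B)`, and averaging the number of solutions of `x + θy = x' + θy'`
over `θ` together with Cauchy–Schwarz gives a `θ` with `|B + θB| ≥ p|B|² / (p + |B|²)`; or, since
`𝔽_p` is generated by `1`, some `θ` outside the quotient set has `θ - 1` inside it, and then
`|B + θB| = |B|²`. Either way, clearing the denominator of `θ` embeds `B + θB` into `D (16k²)`.
Hence `|D|` essentially squares at each step until `|D|² > p`; after that `D` fills more than half
of `𝔽_p`, so one more doubling gives all of it. Starting from `|D 1| ≥ |A| ≥ p^δ` this takes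
`O(log (1/δ))` steps. When `|A| < 4` the prime is bounded in terms of `δ`, and `D p = 𝔽_p`
because it contains every multiple `j (a - b)`, `j < p`.
-/

section Sumset
variable {G : Type*} [AddCommMonoid G] [DecidableEq G] {A : Finset G}

lemma ksum_add (m n : ℕ) (A : Finset G) : ksum (m + n) A = ksum m A + ksum n A := by
  induction m with
  | zero => simp [ksum, singleton_add]
  | succ m ih => rw [Nat.succ_add, ksum, ksum, ih, add_assoc]

lemma nsmul_mem_ksum {a : G} (ha : a ∈ A) (n : ℕ) : n • a ∈ ksum n A := by
  induction n with
  | zero => simp [ksum]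
  | succ n ih => rw [succ_nsmul']; exact add_mem_add ha ih

end Sumset

section SumsetMul
variable {R : Type*} [CommSemiring R] [DecidableEq R] {A : Finset R}

lemma mul_mem_ksum_of_mem (hmul : A * A ⊆ A) {a y : R} (ha : a ∈ A) {n : ℕ}
    (hy : y ∈ ksum n A) : a * y ∈ ksum n A := by
  induction n generalizing y with
  | zero => simp_all [ksum]
  | succ n ih =>
    obtain ⟨b, hb, z, hz, rfl⟩ := mem_add.1 hy
    rw [mul_add]
    exact add_mem_add (hmul (mul_mem_mul ha hb)) (ih hz)

lemma mul_mem_ksum (hmul : A * A ⊆ A) {x y : R} {m n : ℕ} (hx : x ∈ ksum m A)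
    (hy : y ∈ ksum n A) : x * y ∈ ksum (m * n) A := by
  induction m generalizing x with
  | zero => simp_all [ksum]
  | succ m ih =>
    obtain ⟨a, ha, z, hz, rfl⟩ := mem_add.1 hx
    rw [add_mul a z y, Nat.succ_mul, add_comm (m * n), ksum_add]
    exact add_mem_add (mul_mem_ksum_of_mem hmul ha hy) (ih hz)

end SumsetMul

section Kdiff
variable {G : Type*} [AddCommGroup G] [DecidableEq G] {A : Finset G} {k m n : ℕ} {x y : G}

def kdiff (k : ℕ) (A : Finset G) : Finset G := ksum k A - ksum k A

lemma add_mem_kdiff (hx : x ∈ kdiff m A) (hy : y ∈ kdiff n A) : x + y ∈ kdiff (m + n) A := by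
  obtain ⟨s, hs, t, ht, rfl⟩ := mem_sub.1 hx
  obtain ⟨u, hu, v, hv, rfl⟩ := mem_sub.1 hy
  rw [sub_add_sub_comm, kdiff, ksum_add]
  exact sub_mem_sub (add_mem_add hs hu) (add_mem_add ht hv)

lemma neg_mem_kdiff (hx : x ∈ kdiff m A) : -x ∈ kdiff m A := by
  obtain ⟨s, hs, t, ht, rfl⟩ := mem_sub.1 hx
  rw [neg_sub]
  exact sub_mem_sub ht hs

lemma sub_mem_kdiff (hx : x ∈ kdiff m A) (hy : y ∈ kdiff n A) : x - y ∈ kdiff (m + n) A :=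
  sub_eq_add_neg x y ▸ add_mem_kdiff hx (neg_mem_kdiff hy)

lemma nsmul_sub_mem_kdiff {a b : G} (ha : a ∈ A) (hb : b ∈ A) {j : ℕ} (hjk : j ≤ k) :
    j • (a - b) ∈ kdiff k A := by
  have hk : k = j + (k - j) := by omega
  have key : j • (a - b) = (j • a + (k - j) • b) - (j • b + (k - j) • b) := by
    rw [nsmul_sub]; abel
  rw [key, kdiff, hk, ksum_add, ← hk]
  exact sub_mem_sub (add_mem_add (nsmul_mem_ksum ha j) (nsmul_mem_ksum hb _))
    (add_mem_add (nsmul_mem_ksum hb j) (nsmul_mem_ksum hb _))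

lemma zero_mem_kdiff (hA : A.Nonempty) (k : ℕ) : (0 : G) ∈ kdiff k A := by
  obtain ⟨a, ha⟩ := hA
  simpa using nsmul_sub_mem_kdiff ha ha (Nat.zero_le k)

lemma kdiff_mono (hA : A.Nonempty) (hmn : m ≤ n) : kdiff m A ⊆ kdiff n A := fun x hx => by
  simpa [Nat.add_sub_cancel' hmn] using add_mem_kdiff hx (zero_mem_kdiff hA (n - m))

lemma kdiff_eq_univ_of_lt_two_mul_card [Fintype G] (h : Fintype.card G < 2 * #(kdiff m A)) :
    kdiff (2 * m) A = univ := by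
  refine eq_univ_of_forall fun x => ?_
  obtain ⟨z, hz⟩ : ((kdiff m A).image (x + ·) ∩ kdiff m A).Nonempty :=
    inter_nonempty_of_card_lt_card_add_card (subset_univ _) (subset_univ _) (by
      rw [card_image_of_injective _ (add_right_injective x), card_univ]; omega)
  obtain ⟨⟨y, hy, rfl⟩, hxy⟩ := And.imp_left mem_image.1 (mem_inter.1 hz)
  simpa [two_mul] using sub_mem_kdiff hxy hy

lemma kdiff_sub_kdiff_subset (m n : ℕ) : kdiff m A - kdiff n A ⊆ kdiff (m + n) A := by
  intro z hz
  obtain ⟨x, hx, y, hy, rfl⟩ := mem_sub.1 hz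
  exact sub_mem_kdiff hx hy

lemma kdiff_nontrivial (hA : A.Nontrivial) (hk : 1 ≤ k) : (kdiff k A).Nontrivial := by
  obtain ⟨a, ha, b, hb, hab⟩ := hA
  refine ⟨0, zero_mem_kdiff ⟨a, ha⟩ k, a - b, by simpa using nsmul_sub_mem_kdiff ha hb hk, ?_⟩
  exact (sub_ne_zero.2 hab).symm

lemma card_le_card_kdiff_one (hA : A.Nonempty) : #A ≤ #(kdiff 1 A) := by
  obtain ⟨a₀, ha₀⟩ := hA
  exact card_le_card_of_injOn (· - a₀) (fun a ha => by
    simpa only [one_nsmul, mem_coe] using nsmul_sub_mem_kdiff (j := 1) ha ha₀ le_rfl)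
    (sub_left_injective).injOn

end Kdiff

section KdiffMul
variable {R : Type*} [CommRing R] [DecidableEq R] {A : Finset R} {m n : ℕ} {x y : R}

lemma mul_mem_kdiff (hmul : A * A ⊆ A) (hx : x ∈ kdiff m A) (hy : y ∈ kdiff n A) :
    x * y ∈ kdiff (2 * (m * n)) A := by
  obtain ⟨s, hs, t, ht, rfl⟩ := mem_sub.1 hx
  obtain ⟨u, hu, v, hv, rfl⟩ := mem_sub.1 hy
  have key : (s - t) * (u - v) = (s * u + t * v) - (s * v + t * u) := by ring
  rw [key, kdiff, two_mul, ksum_add]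
  exact sub_mem_sub (add_mem_add (mul_mem_ksum hmul hs hu) (mul_mem_ksum hmul ht hv))
    (add_mem_add (mul_mem_ksum hmul hs hv) (mul_mem_ksum hmul ht hu))

end KdiffMul

lemma sq_card_le_card_image_mul_card_filter {α β : Type*} [DecidableEq α] [DecidableEq β]
    (f : α → β) (X : Finset α) :
    #X ^ 2 ≤ #(X.image f) * #{q ∈ X ×ˢ X | f q.1 = f q.2} := by
  have hfiber : ∀ b, {q ∈ {q ∈ X ×ˢ X | f q.1 = f q.2} | f q.1 = b} =
      {a ∈ X | f a = b} ×ˢ {a ∈ X | f a = b} := fun b => by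
    ext ⟨a, a'⟩
    simp only [mem_filter, mem_product]
    constructor
    · rintro ⟨⟨⟨ha, ha'⟩, hf⟩, rfl⟩; exact ⟨⟨ha, rfl⟩, ha', hf.symm⟩
    · rintro ⟨⟨ha, rfl⟩, ha', hf⟩; exact ⟨⟨⟨ha, ha'⟩, hf.symm⟩, rfl⟩
  calc #X ^ 2 = (∑ b ∈ X.image f, #{a ∈ X | f a = b}) ^ 2 := by rw [card_eq_sum_card_image f X]
    _ ≤ #(X.image f) * ∑ b ∈ X.image f, #{a ∈ X | f a = b} ^ 2 := sq_sum_le_card_mul_sum_sq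
    _ = #(X.image f) * #{q ∈ X ×ˢ X | f q.1 = f q.2} := by
      rw [card_eq_sum_card_fiberwise (f := fun q => f q.1) (t := X.image f)
        fun q hq => mem_image_of_mem f (mem_product.1 (mem_filter.1 hq).1).1]
      simp only [hfiber, card_product, sq]

section Field
variable {F : Type*} [Field F]

lemma eq_of_add_mul_eq_add_mul {x y x' y' θ θ' : F} (hne : (x, y) ≠ (x', y'))
    (h : x + θ * y = x' + θ * y') (h' : x + θ' * y = x' + θ' * y') : θ = θ' := by
  have hy : y ≠ y' := fun hy => hne (by subst hy; simpa using h)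
  have : (θ - θ') * (y - y') = 0 := by linear_combination h - h'
  exact sub_eq_zero.1 ((mul_eq_zero.1 this).resolve_right (sub_ne_zero.2 hy))

variable [DecidableEq F] {B : Finset F} {θ : F}

lemma add_smul_finset_eq_image (B : Finset F) (θ : F) :
    B + θ • B = (B ×ˢ B).image fun q => q.1 + θ * q.2 := by
  ext z
  simp [mem_add, mem_smul_finset, and_assoc]

/-- `θ ∈ (B - B) / (B - B)`, avoiding the junk value of division by zero. -/
def IsDiffQuotient (B : Finset F) (θ : F) : Prop :=
  ∃ μ ∈ B - B, μ ≠ 0 ∧ μ * θ ∈ B - B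

lemma card_add_smul_of_not_isDiffQuotient (h : ¬ IsDiffQuotient B θ) :
    #(B + θ • B) = #B ^ 2 := by
  rw [add_smul_finset_eq_image, card_image_of_injOn, card_product, sq]
  rintro ⟨x, y⟩ hxy ⟨x', y'⟩ hxy' heq
  simp only [coe_product, Set.mem_prod, mem_coe] at hxy hxy' heq
  by_contra hne
  have hy : y ≠ y' := fun hy => hne (by subst hy; simpa using heq)
  exact h ⟨y - y', sub_mem_sub hxy.2 hxy'.2, sub_ne_zero.2 hy,
    by rw [show (y - y') * θ = x' - x by linear_combination heq]; exact sub_mem_sub hxy'.1 hxy.1⟩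

lemma isDiffQuotient_zero (hB : B.Nontrivial) : IsDiffQuotient B 0 := by
  obtain ⟨a, ha, b, hb, hab⟩ := hB
  exact ⟨a - b, sub_mem_sub ha hb, sub_ne_zero.2 hab, by simpa using sub_mem_sub ha ha⟩

variable [Fintype F]

lemma sum_card_collisions_le_s3 (B : Finset F) :
    ∑ θ : F, #{q ∈ (B ×ˢ B) ×ˢ (B ×ˢ B) | q.1.1 + θ * q.1.2 = q.2.1 + θ * q.2.2}
      ≤ Fintype.card F * #B ^ 2 + #B ^ 4 := by
  set X := B ×ˢ B
  let r : (F × F) × (F × F) → F → Prop := fun q θ => q.1.1 + θ * q.1.2 = q.2.1 + θ * q.2.2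
  have hsplit : ∀ θ, #{q ∈ X ×ˢ X | r q θ} ≤ #X + #(X.offDiag.bipartiteBelow r θ) := fun θ =>
    calc #{q ∈ X ×ˢ X | r q θ} ≤ #(X.diag ∪ X.offDiag.bipartiteBelow r θ) := by
          refine card_le_card fun q hq => ?_
          by_cases hq' : q.1 = q.2 <;> simp_all [bipartiteBelow]
      _ ≤ #X + #(X.offDiag.bipartiteBelow r θ) := (card_union_le _ _).trans_eq (by rw [diag_card])
  have hoff : ∑ θ, #(X.offDiag.bipartiteBelow r θ) ≤ #X ^ 2 := by
    rw [← sum_card_bipartiteAbove_eq_sum_card_bipartiteBelow]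
    calc ∑ q ∈ X.offDiag, #(univ.bipartiteAbove r q) ≤ #X.offDiag • 1 :=
          sum_le_card_nsmul _ _ _ fun q hq => card_le_one.2 fun θ hθ θ' hθ' =>
            eq_of_add_mul_eq_add_mul (mem_offDiag.1 hq).2.2
              ((mem_bipartiteAbove r).1 hθ).2 ((mem_bipartiteAbove r).1 hθ').2
      _ ≤ #X ^ 2 := by rw [smul_eq_mul, mul_one, offDiag_card, sq]; exact Nat.sub_le _ _
  calc _ ≤ ∑ θ : F, (#X + #(X.offDiag.bipartiteBelow r θ)) := sum_le_sum fun θ _ => hsplit θ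
    _ ≤ Fintype.card F * #B ^ 2 + #B ^ 4 := by
      rw [sum_add_distrib, sum_const, card_univ, smul_eq_mul, card_product, ← sq]
      have : (#B ^ 2) ^ 2 = #B ^ 4 := by ring
      rw [card_product, ← sq, this] at hoff
      omega

lemma exists_card_mul_le_card_add_smul (hB : B.Nonempty) :
    ∃ θ : F, Fintype.card F * #B ^ 2 ≤ #(B + θ • B) * (Fintype.card F + #B ^ 2) := by
  set q := Fintype.card F
  obtain ⟨θ, -, hθ⟩ := exists_le_of_sum_le univ_nonempty (f := fun θ =>
      q * #{x ∈ (B ×ˢ B) ×ˢ (B ×ˢ B) | x.1.1 + θ * x.1.2 = x.2.1 + θ * x.2.2})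
    (g := fun _ => q * #B ^ 2 + #B ^ 4) (by
      rw [← mul_sum, sum_const, card_univ, smul_eq_mul]
      exact Nat.mul_le_mul_left q (sum_card_collisions_le_s3 B))
  refine ⟨θ, ?_⟩
  have hCS := sq_card_le_card_image_mul_card_filter (fun x => x.1 + θ * x.2) (B ×ˢ B)
  rw [← add_smul_finset_eq_image, card_product, ← sq] at hCS
  have hpos : 0 < #B ^ 2 := by positivity
  nlinarith

end Field

section KdiffField
variable {F : Type*} [Field F] [DecidableEq F] {A : Finset F} {k m : ℕ}

lemma card_add_smul_kdiff_le (hmul : A * A ⊆ A) {μ θ : F} (hμ : μ ≠ 0)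
    (hμ₁ : μ ∈ kdiff m A) (hμ₂ : μ * θ ∈ kdiff m A) :
    #(kdiff k A + θ • kdiff k A) ≤ #(kdiff (4 * (m * k)) A) := by
  refine card_le_card_of_injOn (μ * ·) (fun z hz => ?_) (mul_right_injective₀ hμ).injOn
  obtain ⟨x, hx, _, ⟨y, hy, rfl⟩, rfl⟩ := by simpa [mem_add, mem_smul_finset] using hz
  change μ * (x + θ • y) ∈ _
  rw [show μ * (x + θ • y) = μ * x + μ * θ * y by rw [smul_eq_mul]; ring,
    show 4 * (m * k) = 2 * (m * k) + 2 * (m * k) by ring]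
  exact add_mem_kdiff (mul_mem_kdiff hmul hμ₁ hx) (mul_mem_kdiff hmul hμ₂ hy)

lemma exists_mem_kdiff_of_isDiffQuotient (hA : A.Nonempty) {θ : F}
    (h : IsDiffQuotient (kdiff k A) θ ∨ IsDiffQuotient (kdiff k A) (θ - 1)) :
    ∃ μ ≠ 0, μ ∈ kdiff (4 * k) A ∧ μ * θ ∈ kdiff (4 * k) A := by
  have hsub := kdiff_sub_kdiff_subset (A := A) k k
  have h2k : kdiff (k + k) A ⊆ kdiff (4 * k) A := kdiff_mono hA (by omega)
  rcases h with ⟨μ, hμ, hμ0, hμθ⟩ | ⟨μ, hμ, hμ0, hμθ⟩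
  · exact ⟨μ, hμ0, h2k (hsub hμ), h2k (hsub hμθ)⟩
  · refine ⟨μ, hμ0, h2k (hsub hμ), ?_⟩
    have := add_mem_kdiff (hsub hμθ) (hsub hμ)
    rwa [mul_sub, mul_one, sub_add_cancel, show k + k + (k + k) = 4 * k by ring] at this

end KdiffField

lemma two_mul_pow_two_pow_le {b : ℕ → ℕ} {n : ℕ} (h : ∀ j < n, b j ^ 2 ≤ 2 * b (j + 1)) :
    2 * b 0 ^ 2 ^ n ≤ 2 ^ 2 ^ n * b n := by
  induction n with
  | zero => simp
  | succ n ih =>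
    have ih := ih fun j hj => h j (by omega)
    have hsq : 4 * b 0 ^ 2 ^ (n + 1) ≤ 2 ^ 2 ^ (n + 1) * b n ^ 2 := by
      calc 4 * b 0 ^ 2 ^ (n + 1) = (2 * b 0 ^ 2 ^ n) ^ 2 := by ring
        _ ≤ (2 ^ 2 ^ n * b n) ^ 2 := Nat.pow_le_pow_left ih 2
        _ = 2 ^ 2 ^ (n + 1) * b n ^ 2 := by ring
    nlinarith [Nat.mul_le_mul_left (2 ^ 2 ^ (n + 1)) (h n (by omega))]

def level : ℕ → ℕ
  | 0 => 1
  | j + 1 => 16 * level j ^ 2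

lemma one_le_level (j : ℕ) : 1 ≤ level j := by
  induction j with
  | zero => rfl
  | succ j ih => simp only [level]; nlinarith

lemma level_mono : Monotone level :=
  monotone_nat_of_le_succ fun j => by simp only [level]; nlinarith [one_le_level j]

lemma ZMod.exists_not_add_one {n : ℕ} [NeZero n] {P : ZMod n → Prop} (h0 : P 0)
    (h : ¬ ∀ x, P x) : ∃ x, P x ∧ ¬ P (x + 1) := by
  by_contra! hstep
  refine h fun x => ZMod.natCast_zmod_val x ▸ ?_
  induction x.val with
  | zero => simpa using h0
  | succ n ih => simpa using hstep _ ih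

section ZModP
variable {p : ℕ} [Fact p.Prime]

lemma exists_isDiffQuotient_card_add_smul {B : Finset (ZMod p)} (hB : B.Nontrivial) :
    ∃ θ, (IsDiffQuotient B θ ∨ IsDiffQuotient B (θ - 1)) ∧
      p * #B ^ 2 ≤ #(B + θ • B) * (p + #B ^ 2) := by
  by_cases hall : ∀ θ, IsDiffQuotient B θ
  · obtain ⟨θ, hθ⟩ := exists_card_mul_le_card_add_smul hB.nonempty
    rw [ZMod.card] at hθ
    exact ⟨θ, .inl (hall θ), hθ⟩
  · obtain ⟨θ, hθ, hθ₁⟩ := ZMod.exists_not_add_one (isDiffQuotient_zero hB) hall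
    refine ⟨θ + 1, .inr (by simpa using hθ), ?_⟩
    rw [card_add_smul_of_not_isDiffQuotient hθ₁]
    nlinarith

variable {A : Finset (ZMod p)} {k : ℕ}

lemma kdiff_eq_univ_of_le (hA : A.Nontrivial) (hpk : p ≤ k) : kdiff k A = univ := by
  obtain ⟨a, ha, b, hb, hab⟩ := hA
  refine eq_univ_of_forall fun x => ?_
  have hx : x = (x / (a - b)).val • (a - b) := by
    rw [nsmul_eq_mul, ZMod.natCast_zmod_val, div_mul_cancel₀ _ (sub_ne_zero.2 hab)]
  rw [hx]
  exact nsmul_sub_mem_kdiff ha hb ((ZMod.val_lt _).le.trans hpk)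

lemma mul_sq_card_kdiff_le (hmul : A * A ⊆ A) (hA : A.Nontrivial) (hk : 1 ≤ k) :
    p * #(kdiff k A) ^ 2 ≤ #(kdiff (16 * k ^ 2) A) * (p + #(kdiff k A) ^ 2) := by
  obtain ⟨θ, hθ, hcard⟩ := exists_isDiffQuotient_card_add_smul (kdiff_nontrivial hA hk)
  obtain ⟨μ, hμ, hμ₁, hμ₂⟩ := exists_mem_kdiff_of_isDiffQuotient hA.nonempty hθ
  have := card_add_smul_kdiff_le (k := k) hmul hμ hμ₁ hμ₂
  rw [show 4 * (4 * k * k) = 16 * k ^ 2 by ring] at this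
  exact hcard.trans (Nat.mul_le_mul_right _ this)

lemma sq_card_kdiff_le_two_mul (hmul : A * A ⊆ A) (hA : A.Nontrivial) (hk : 1 ≤ k)
    (h : #(kdiff k A) ^ 2 ≤ p) : #(kdiff k A) ^ 2 ≤ 2 * #(kdiff (16 * k ^ 2) A) := by
  have := mul_sq_card_kdiff_le hmul hA hk
  have hp := (Fact.out : p.Prime).pos
  nlinarith

lemma kdiff_eq_univ_of_lt_sq_card (hmul : A * A ⊆ A) (hA : A.Nontrivial) (hk : 1 ≤ k)
    (h : p < #(kdiff k A) ^ 2) : kdiff (32 * k ^ 2) A = univ := by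
  have := mul_sq_card_kdiff_le hmul hA hk
  rw [show 32 * k ^ 2 = 2 * (16 * k ^ 2) by ring]
  refine kdiff_eq_univ_of_lt_two_mul_card ?_
  rw [ZMod.card]
  by_contra! hM
  have hp := (Fact.out : p.Prime).pos
  nlinarith [Nat.mul_le_mul_right (p + #(kdiff k A) ^ 2) hM]

lemma exists_lt_sq_card_kdiff_level (hmul : A * A ⊆ A) (hA : A.Nontrivial) (h4 : 4 ≤ #A) {J : ℕ}
    (hJ : p ≤ #A ^ 2 ^ J) : ∃ j ≤ J, p < #(kdiff (level j) A) ^ 2 := by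
  by_contra! hsmall
  set b := fun j => #(kdiff (level j) A)
  have hgrowth := two_mul_pow_two_pow_le (b := b) (n := J + 1) fun j hj =>
    sq_card_kdiff_le_two_mul hmul hA (one_le_level j) (hsmall j (by omega))
  have hb0 : #A ≤ b 0 := card_le_card_kdiff_one hA.nonempty
  have hbJ : b (J + 1) ≤ p := by simpa [ZMod.card] using card_le_univ (kdiff (level (J + 1)) A)
  have hbase : 2 ^ 2 ^ (J + 1) * p ≤ b 0 ^ 2 ^ (J + 1) :=
    calc 2 ^ 2 ^ (J + 1) * p ≤ 4 ^ 2 ^ J * b 0 ^ 2 ^ J := by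
          rw [show 2 ^ 2 ^ (J + 1) = 4 ^ 2 ^ J by rw [pow_succ, pow_mul']; norm_num]
          exact Nat.mul_le_mul_left _ (hJ.trans (Nat.pow_le_pow_left hb0 _))
      _ = (4 * b 0) ^ 2 ^ J := (mul_pow _ _ _).symm
      _ ≤ (b 0 ^ 2) ^ 2 ^ J := Nat.pow_le_pow_left (by nlinarith) _
      _ = b 0 ^ 2 ^ (J + 1) := by rw [← pow_mul, pow_succ, mul_comm]
  have hp := (Fact.out : p.Prime).pos
  have := Nat.mul_le_mul_left (2 ^ 2 ^ (J + 1)) hbJ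
  nlinarith [Nat.one_le_two_pow (n := 2 ^ (J + 1))]

lemma kdiff_level_eq_univ (hmul : A * A ⊆ A) (hA : A.Nontrivial) (h4 : 4 ≤ #A) {J : ℕ}
    (hJ : p ≤ #A ^ 2 ^ J) : kdiff (2 * level (J + 1)) A = univ := by
  obtain ⟨j, hj, hbig⟩ := exists_lt_sq_card_kdiff_level hmul hA h4 hJ
  refine eq_univ_of_forall fun x => kdiff_mono hA.nonempty ?_
    ((kdiff_eq_univ_of_lt_sq_card hmul hA (one_le_level j) hbig).symm ▸ mem_univ x)
  have := level_mono (show j + 1 ≤ J + 1 by omega)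
  have hj : level (j + 1) = 16 * level j ^ 2 := rfl
  omega

end ZModP

lemma one_le_mul_two_pow_ceil_inv {δ : ℝ} (hδ : 0 < δ) : 1 ≤ δ * 2 ^ ⌈δ⁻¹⌉₊ :=
  calc (1 : ℝ) = δ * δ⁻¹ := (mul_inv_cancel₀ hδ.ne').symm
    _ ≤ δ * ⌈δ⁻¹⌉₊ := mul_le_mul_of_nonneg_left (Nat.le_ceil _) hδ.le
    _ ≤ δ * 2 ^ ⌈δ⁻¹⌉₊ := mul_le_mul_of_nonneg_left
        (by exact_mod_cast (Nat.lt_two_pow_self).le) hδ.le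

lemma le_pow_two_pow_of_rpow_le {p a J : ℕ} {δ : ℝ} (hp : 1 ≤ p) (hJ : 1 ≤ δ * 2 ^ J)
    (h : (p : ℝ) ^ δ ≤ a) : p ≤ a ^ 2 ^ J := by
  have hp' : (1 : ℝ) ≤ p := by exact_mod_cast hp
  have : (p : ℝ) ≤ (a : ℝ) ^ 2 ^ J :=
    calc (p : ℝ) = (p : ℝ) ^ (1 : ℝ) := (Real.rpow_one _).symm
      _ ≤ (p : ℝ) ^ (δ * 2 ^ J) := Real.rpow_le_rpow_of_exponent_le hp' hJ
      _ = ((p : ℝ) ^ δ) ^ 2 ^ J := by rw [Real.rpow_mul (by positivity), ← Real.rpow_natCast]; norm_cast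
      _ ≤ (a : ℝ) ^ 2 ^ J := pow_le_pow_left₀ (by positivity) h _
  exact_mod_cast this

lemma mul_subset_of_subgroup {p : ℕ} {H : Subgroup (ZMod p)ˣ} {Hs : Finset (ZMod p)}
    (hHs : ∀ x : ZMod p, x ∈ Hs ↔ ∃ u : (ZMod p)ˣ, u ∈ H ∧ (u : ZMod p) = x) : Hs * Hs ⊆ Hs := by
  intro z hz
  obtain ⟨x, hx, y, hy, rfl⟩ := mem_mul.1 hz
  obtain ⟨u, hu, rfl⟩ := (hHs x).1 hx
  obtain ⟨v, hv, rfl⟩ := (hHs y).1 hy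
  exact (hHs _).2 ⟨u * v, mul_mem hu hv, Units.val_mul u v⟩

theorem stmt_3_general (δ : ℝ) (hδ₀ : 0 < δ) :
    ∃ k : ℕ, 0 < k ∧ ∀ p : ℕ, ∀ _ : Fact p.Prime, ∀ H : Subgroup (ZMod p)ˣ,
      ∀ Hs : Finset (ZMod p),
      (∀ x : ZMod p, x ∈ Hs ↔ ∃ u : (ZMod p)ˣ, u ∈ H ∧ (u : ZMod p) = x) →
      (p : ℝ) ^ δ ≤ (Hs.card : ℝ) →
      ∀ x : ZMod p, x ∈ ksum k Hs - ksum k Hs := by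
  set J := ⌈δ⁻¹⌉₊
  set k := max (2 * level (J + 1)) ⌈(4 : ℝ) ^ δ⁻¹⌉₊
  refine ⟨k, lt_max_of_lt_left (by linarith [one_le_level (J + 1)]), fun p _ H Hs hHs hcard x => ?_⟩
  have hp := (Fact.out : p.Prime).one_lt
  have hmul := mul_subset_of_subgroup hHs
  have hnt : Hs.Nontrivial := one_lt_card_iff_nontrivial.1 <| by
    exact_mod_cast (Real.one_lt_rpow (by exact_mod_cast hp) hδ₀).trans_le hcard
  suffices h : kdiff k Hs = univ from (h ▸ mem_univ x : x ∈ kdiff k Hs)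
  rcases lt_or_ge #Hs 4 with h4 | h4
  · refine kdiff_eq_univ_of_le hnt (le_max_of_le_right (Nat.lt_ceil.2 ?_).le)
    rw [Real.lt_rpow_inv_iff_of_pos (by positivity) (by norm_num) hδ₀]
    exact hcard.trans_lt (by exact_mod_cast h4)
  · rw [← univ_subset_iff, ← kdiff_level_eq_univ hmul hnt h4
      (le_pow_two_pow_of_rpow_le hp.le (one_le_mul_two_pow_ceil_inv hδ₀) hcard)]
    exact kdiff_mono hnt.nonempty (le_max_left _ _)

theorem stmt_3 (δ : ℝ) (hδ₀ : 0 < δ) (hδ₁ : δ < 1) :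
    ∃ k : ℕ, 0 < k ∧ ∀ p : ℕ, ∀ _ : Fact p.Prime, ∀ H : Subgroup (ZMod p)ˣ,
      ∀ Hs : Finset (ZMod p),
      (∀ x : ZMod p, x ∈ Hs ↔ ∃ u : (ZMod p)ˣ, u ∈ H ∧ (u : ZMod p) = x) →
      (p : ℝ) ^ δ ≤ (Hs.card : ℝ) →
      ∀ x : ZMod p, x ∈ ksum k Hs - ksum k Hs :=
  stmt_3_general δ hδ₀
end

section
/- There is an absolute constant C such that: if A ⊆ F_p is finite nonempty, K ≥ 2, and ξ₁, ξ₂ ∈ F_p^× satisfy |A + ξᵢ·A| ≤ K|A| for i = 1, 2, then |A + ξ₁ξ₂·A| ≤ K^C|A|. -/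
/-! Ruzsa's triangle inequality applied to `A`, `ξ₁ • A`, `(ξ₁ * ξ₂) • A` gives
`|A + ξ₁ξ₂·A| |A| ≤ |A + ξ₁·A| |ξ₁·A + ξ₁ξ₂·A| = |A + ξ₁·A| |A + ξ₂·A|`, since dilation by `ξ₁ ≠ 0`
preserves cardinalities; hence the statement holds with `C = 2`. -/

open Finset
open scoped Pointwise

theorem Finset.card_add_mul_smul_mul_card_le {α β : Type*} [GroupWithZero α] [AddCommGroup β]
    [DistribMulAction α β] [DecidableEq β] (A : Finset β) {a : α} (ha : a ≠ 0) (b : α) :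
    #(A + (a * b) • A) * #A ≤ #(A + a • A) * #(A + b • A) := by
  have h := ruzsa_triangle_inequality_add_add_add A (a • A) ((a * b) • A)
  rw [mul_smul]
  rwa [card_smul_finset₀ ha, mul_smul, ← smul_add, card_smul_finset₀ ha] at h

theorem Finset.card_add_mul_smul_le_sq {α β : Type*} [GroupWithZero α] [AddCommGroup β]
    [DistribMulAction α β] [DecidableEq β] {A : Finset β} (hA : A.Nonempty) {a b : α} (ha : a ≠ 0)
    {K : ℝ} (hKa : (#(A + a • A) : ℝ) ≤ K * #A) (hKb : (#(A + b • A) : ℝ) ≤ K * #A) :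
    (#(A + (a * b) • A) : ℝ) ≤ K ^ 2 * #A := by
  have hA₀ : (0 : ℝ) < #A := by exact_mod_cast hA.card_pos
  have hK : 0 ≤ K * #A := (Nat.cast_nonneg _).trans hKa
  have key : (#(A + (a * b) • A) * #A : ℝ) ≤ #(A + a • A) * #(A + b • A) := by
    exact_mod_cast A.card_add_mul_smul_mul_card_le ha b
  refine le_of_mul_le_mul_right ?_ hA₀
  calc (#(A + (a * b) • A) * #A : ℝ) ≤ #(A + a • A) * #(A + b • A) := key
    _ ≤ (K * #A) * (K * #A) := mul_le_mul hKa hKb (Nat.cast_nonneg _) hK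
    _ = K ^ 2 * #A * #A := by ring

theorem stmt_6 :
    ∃ C : ℝ, 0 < C ∧ ∀ p : ℕ, p.Prime → ∀ A : Finset (ZMod p), A.Nonempty →
      ∀ K : ℝ, 2 ≤ K → ∀ ξ₁ ξ₂ : ZMod p, ξ₁ ≠ 0 → ξ₂ ≠ 0 →
      ((A + ξ₁ • A).card : ℝ) ≤ K * A.card →
      ((A + ξ₂ • A).card : ℝ) ≤ K * A.card →
      ((A + (ξ₁ * ξ₂) • A).card : ℝ) ≤ K ^ C * A.card := by
  refine ⟨2, two_pos, fun p hp A hA K _ ξ₁ ξ₂ hξ₁ _ h₁ h₂ => ?_⟩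
  have := Fact.mk hp
  rw [Real.rpow_two]
  exact card_add_mul_smul_le_sq hA hξ₁ h₁ h₂
end

section
/- There is an absolute constant C such that: if A ⊆ F_p is finite nonempty, K ≥ 2, and ξ₁, ξ₂ ∈ F_p^× satisfy ξ₁ + ξ₂ ≠ 0 and |A + ξᵢ·A| ≤ K|A| for i = 1, 2, then |A + (ξ₁+ξ₂)·A| ≤ K^C|A|. -/
open Finset
open scoped Pointwise

/-!
Ruzsa's covering lemma puts `ξ₁ • A` inside at most `K` translates of `A - A`, so
`A + (ξ₁ + ξ₂) • A` lies in at most `K` translates of `2 • A - A + ξ₂ • A`. Plünnecke–Ruzsa,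
applied with the base set `ξ₁ • A` (which has the size of `A`), gives `#(3 • A - A) ≤ K ^ 4 * #A`,
and Ruzsa's triangle inequality through `A` then bounds `#(2 • A - A + ξ₂ • A)` by `K ^ 5 * #A`.
-/

namespace Finset

section AddCommGroup
variable {G : Type*} [AddCommGroup G] [DecidableEq G] {A X Y : Finset G} {K L : ℝ}

lemma card_add_le_of_card_add_le_of_card_add_le (hA : A.Nonempty)
    (hX : #(X + A) ≤ L * #A) (hY : #(A + Y) ≤ K * #A) : #(X + Y) ≤ L * K * #A := by
  have hA₀ : (0 : ℝ) < #A := by exact_mod_cast hA.card_pos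
  have hL : 0 ≤ L := nonneg_of_mul_nonneg_left ((Nat.cast_nonneg _).trans hX) hA₀
  have triangle : (#(X + Y) * #A : ℝ) ≤ #(X + A) * #(A + Y) := by
    exact_mod_cast ruzsa_triangle_inequality_add_add_add X A Y
  refine le_of_mul_le_mul_right ?_ hA₀
  calc (#(X + Y) * #A : ℝ) ≤ #(X + A) * #(A + Y) := triangle
    _ ≤ (L * #A) * (K * #A) := mul_le_mul hX hY (by positivity) (by positivity)
    _ = L * K * #A * #A := by ring

end AddCommGroup

section Module
variable {R M : Type*} [DivisionRing R] [AddCommGroup M] [Module R M] [DecidableEq M]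
  {A : Finset M} {ξ : R} {K : ℝ}

lemma card_nsmul_sub_nsmul_le_of_card_add_smul_le (hA : A.Nonempty) (hξ : ξ ≠ 0)
    (h : #(A + ξ • A) ≤ K * #A) (m n : ℕ) : #(m • A - n • A) ≤ K ^ (m + n) * #A := by
  have hcard : #(ξ • A) = #A := card_smul_finset₀ hξ A
  have hA₀ : (0 : ℝ) < #A := by exact_mod_cast hA.card_pos
  have pluennecke :
      (#(m • A - n • A) : ℝ) ≤ ((#(ξ • A + A) : ℝ) / #(ξ • A)) ^ (m + n) * #(ξ • A) := by
    have := NNRat.cast_le (K := ℝ) |>.2 <|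
      pluennecke_ruzsa_inequality_nsmul_sub_nsmul_add (hA.smul_finset (a := ξ)) A m n
    push_cast at this
    exact this
  rw [hcard, add_comm] at pluennecke
  refine pluennecke.trans (mul_le_mul_of_nonneg_right ?_ hA₀.le)
  gcongr
  exact (div_le_iff₀ hA₀).2 h

lemma add_add_smul_subset {F : Finset M} {ξ₁ ξ₂ : R} (hcover : ξ₁ • A ⊆ F + (A - A)) :
    A + (ξ₁ + ξ₂) • A ⊆ F + (2 • A - A + ξ₂ • A) := by
  intro x hx
  obtain ⟨a, ha, _, hy, rfl⟩ := mem_add.1 hx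
  obtain ⟨b, hb, rfl⟩ := mem_smul_finset.1 hy
  obtain ⟨f, hf, _, hd, hfa⟩ := mem_add.1 (hcover (smul_mem_smul_finset hb))
  obtain ⟨a₁, ha₁, a₂, ha₂, rfl⟩ := mem_sub.1 hd
  refine mem_add.2 ⟨f, hf, a + a₁ - a₂ + ξ₂ • b, ?_, ?_⟩
  · rw [two_nsmul]
    exact add_mem_add (sub_mem_sub (add_mem_add ha ha₁) ha₂) (smul_mem_smul_finset hb)
  · simp only [add_smul, ← hfa]
    abel

theorem card_add_add_smul_le (hA : A.Nonempty) {ξ₁ ξ₂ : R} (hξ₁ : ξ₁ ≠ 0)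
    (h₁ : #(A + ξ₁ • A) ≤ K * #A) (h₂ : #(A + ξ₂ • A) ≤ K * #A) :
    #(A + (ξ₁ + ξ₂) • A) ≤ K ^ 6 * #A := by
  obtain ⟨F, -, hF, hcover⟩ := ruzsa_covering_add hA (A := ξ₁ • A) (by rwa [add_comm])
  have h₃ : #(2 • A - A + A) ≤ K ^ 4 * #A := by
    rw [show 2 • A - A + A = 3 • A - 1 • A by
      rw [one_nsmul, show 3 • A = 2 • A + A from succ_nsmul A 2, sub_add_eq_add_sub]]
    exact_mod_cast card_nsmul_sub_nsmul_le_of_card_add_smul_le hA hξ₁ h₁ 3 1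
  calc (#(A + (ξ₁ + ξ₂) • A) : ℝ) ≤ #(F + (2 • A - A + ξ₂ • A)) := by
        exact_mod_cast card_le_card (add_add_smul_subset hcover)
    _ ≤ #F * #(2 • A - A + ξ₂ • A) := by exact_mod_cast card_add_le
    _ ≤ K * (K ^ 4 * K * #A) :=
        mul_le_mul hF (card_add_le_of_card_add_le_of_card_add_le hA h₃ h₂) (by positivity)
          ((Nat.cast_nonneg _).trans hF)
    _ = K ^ 6 * #A := by ring

end Module

end Finset

theorem stmt_7 :
    ∃ C : ℝ, 0 < C ∧ ∀ p : ℕ, p.Prime → ∀ A : Finset (ZMod p), A.Nonempty →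
      ∀ K : ℝ, 2 ≤ K → ∀ ξ₁ ξ₂ : ZMod p, ξ₁ ≠ 0 → ξ₂ ≠ 0 → ξ₁ + ξ₂ ≠ 0 →
      ((A + ξ₁ • A).card : ℝ) ≤ K * A.card →
      ((A + ξ₂ • A).card : ℝ) ≤ K * A.card →
      ((A + (ξ₁ + ξ₂) • A).card : ℝ) ≤ K ^ C * A.card := by
  refine ⟨6, by norm_num, fun p hp A hA K _ ξ₁ ξ₂ hξ₁ _ _ h₁ h₂ ↦ ?_⟩
  have : Fact p.Prime := ⟨hp⟩
  exact_mod_cast card_add_add_smul_le hA hξ₁ h₁ h₂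
end

section
/- Let S be a finite set, 0 < δ ≤ 1, and S₁, ..., S_k ⊆ S with |S_i| ≥ δ|S| for every i. Then there exists an index i such that |S_i ∩ S_j| ≥ δ²|S|/2 holds for at least δ²k/2 values of j ∈ {1, ..., k}. -/
/-!
Let d(x) be the number of sets Sᵢ containing x. Then ∑ᵢ |Sᵢ| = ∑ₓ d(x) ≥ δk|S| and
∑ᵢ ∑ⱼ |Sᵢ ∩ Sⱼ| = ∑ₓ d(x)², so by Cauchy–Schwarz ∑ᵢ ∑ⱼ |Sᵢ ∩ Sⱼ| ≥ δ²k²|S|, and some i has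
∑ⱼ |Sᵢ ∩ Sⱼ| ≥ δ²k|S|. Each term of this sum is at most |S| and the terms below δ²|S|/2 add up
to at most δ²k|S|/2, so at least δ²k/2 of the terms are at least δ²|S|/2.
-/

open Finset

namespace Finset

theorem sum_le_card_filter_le_nsmul_add {ι M : Type*} [AddCommMonoid M] [LinearOrder M]
    [IsOrderedAddMonoid M] (s : Finset ι) {f : ι → M} {b t : M} (hfb : ∀ j ∈ s, f j ≤ b)
    (ht : 0 ≤ t) : ∑ j ∈ s, f j ≤ #{j ∈ s | t ≤ f j} • b + #s • t := by
  rw [← sum_filter_add_sum_filter_not s (fun j => t ≤ f j)]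
  gcongr
  · exact sum_le_card_nsmul _ _ _ fun j hj => hfb j (mem_filter.mp hj).1
  · calc ∑ j ∈ s with ¬t ≤ f j, f j ≤ #{j ∈ s | ¬t ≤ f j} • t :=
          sum_le_card_nsmul _ _ _ fun j hj => (not_le.mp (mem_filter.mp hj).2).le
      _ ≤ #s • t := nsmul_le_nsmul_left ht (card_filter_le _ _)

variable {ι α : Type*} [Fintype ι] [DecidableEq α] {s : Finset α} {A : ι → Finset α}

theorem sum_card_eq_sum_card_filter_mem (hA : ∀ i, A i ⊆ s) :
    ∑ i, #(A i) = ∑ x ∈ s, #{i | x ∈ A i} := by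
  calc ∑ i, #(A i) = ∑ i, ∑ x ∈ s, if x ∈ A i then 1 else 0 := by
        refine sum_congr rfl fun i _ => ?_
        rw [← card_filter, filter_mem_eq_inter, inter_eq_right.mpr (hA i)]
    _ = ∑ x ∈ s, #{i | x ∈ A i} := by
        rw [sum_comm]
        simp only [card_filter]

theorem sum_sum_card_inter_eq_sum_sq (hA : ∀ i, A i ⊆ s) :
    ∑ i, ∑ j, #(A i ∩ A j) = ∑ x ∈ s, #{i | x ∈ A i} ^ 2 := by
  have hpairs := sum_card_eq_sum_card_filter_mem (A := fun p : ι × ι => A p.1 ∩ A p.2)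
    fun p => inter_subset_left.trans (hA p.1)
  rw [← Fintype.sum_prod_type', hpairs]
  refine sum_congr rfl fun x _ => ?_
  rw [sq, ← card_product, ← filter_product]
  simp only [mem_inter, univ_product_univ]

theorem sq_sum_card_le_card_mul_sum_sum_card_inter (hA : ∀ i, A i ⊆ s) :
    (∑ i, #(A i)) ^ 2 ≤ #s * ∑ i, ∑ j, #(A i ∩ A j) := by
  rw [sum_card_eq_sum_card_filter_mem hA, sum_sum_card_inter_eq_sum_sq hA]
  exact sq_sum_le_card_mul_sum_sq

theorem exists_sq_mul_card_le_sum_card_inter [Nonempty ι] {δ : ℝ} (hδ : 0 ≤ δ)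
    (hA : ∀ i, A i ⊆ s) (hsize : ∀ i, δ * #s ≤ #(A i)) :
    ∃ i, δ ^ 2 * Fintype.card ι * #s ≤ ∑ j, (#(A i ∩ A j) : ℝ) := by
  have hsum : Fintype.card ι * (δ * #s) ≤ ∑ i, (#(A i) : ℝ) := by
    simpa using card_nsmul_le_sum univ _ _ fun i _ => hsize i
  have hCS : (∑ i, (#(A i) : ℝ)) ^ 2 ≤ #s * ∑ i, ∑ j, (#(A i ∩ A j) : ℝ) := by
    exact_mod_cast sq_sum_card_le_card_mul_sum_sum_card_inter hA
  have htotal : ∑ _i : ι, δ ^ 2 * Fintype.card ι * #s ≤ ∑ i, ∑ j, (#(A i ∩ A j) : ℝ) := by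
    rw [sum_const, card_univ, nsmul_eq_mul]
    rcases (#s).eq_zero_or_pos with hs | hs
    · rw [hs, Nat.cast_zero, mul_zero, mul_zero]
      exact sum_nonneg fun i _ => sum_nonneg fun j _ => Nat.cast_nonneg _
    · have hs : (0 : ℝ) < #s := by exact_mod_cast hs
      refine le_of_mul_le_mul_left ?_ hs
      calc (#s : ℝ) * (Fintype.card ι * (δ ^ 2 * Fintype.card ι * #s))
          = (Fintype.card ι * (δ * #s)) ^ 2 := by ring
        _ ≤ #s * ∑ i, ∑ j, (#(A i ∩ A j) : ℝ) :=
          (pow_le_pow_left₀ (by positivity) hsum 2).trans hCS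
  obtain ⟨i, -, hi⟩ := exists_le_of_sum_le univ_nonempty htotal
  exact ⟨i, hi⟩

end Finset

theorem stmt_8 {α : Type*} [DecidableEq α] (S : Finset α) (k : ℕ) (hk : 0 < k)
    (δ : ℝ) (hδ₀ : 0 < δ) (hδ₁ : δ ≤ 1) (Si : Fin k → Finset α)
    (hsub : ∀ i, Si i ⊆ S) (hsize : ∀ i, δ * S.card ≤ ((Si i).card : ℝ)) :
    ∃ i : Fin k,
      δ ^ 2 * k / 2 ≤ ({j : Fin k | δ ^ 2 * S.card / 2 ≤ ((Si i ∩ Si j).card : ℝ)}.ncard : ℝ) := by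
  have : NeZero k := ⟨hk.ne'⟩
  rcases S.card.eq_zero_or_pos with hS | hS
  · refine ⟨0, ?_⟩
    have hall : {j : Fin k | δ ^ 2 * S.card / 2 ≤ ((Si 0 ∩ Si j).card : ℝ)} = Set.univ :=
      Set.eq_univ_of_forall fun j => by simp [hS]
    rw [hall, Set.ncard_univ, Nat.card_eq_fintype_card, Fintype.card_fin]
    nlinarith [pow_le_one₀ (n := 2) hδ₀.le hδ₁, (Nat.cast_nonneg k : (0 : ℝ) ≤ k)]
  obtain ⟨i, hi⟩ := exists_sq_mul_card_le_sum_card_inter hδ₀.le hsub hsize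
  refine ⟨i, ?_⟩
  have hinter (j : Fin k) : ((Si i ∩ Si j).card : ℝ) ≤ S.card := by
    exact_mod_cast card_le_card (inter_subset_left.trans (hsub i))
  have hsplit := sum_le_card_filter_le_nsmul_add univ (fun j _ => hinter j)
    (t := δ ^ 2 * S.card / 2) (by positivity)
  rw [← coe_filter_univ, Set.ncard_coe_finset]
  simp only [nsmul_eq_mul, card_univ, Fintype.card_fin] at hi hsplit
  refine le_of_mul_le_mul_right ?_ (by exact_mod_cast hS : (0 : ℝ) < S.card)
  linarith
end

section
/- Let H ⊆ F_p be a finite nonempty set, 0 < α < 1, and B ⊆ Spec_α(H). Then the number of ordered pairs (x, y) ∈ B × B with x − y ∈ Spec_{α²/2}(H) is at least (α²/2)|B|². -/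
open Finset
open scoped Pointwise

/-- The additive character `a ↦ e(a/p) = e^{2πia/p}` on `ZMod p`. -/
noncomputable def ep (p : ℕ) (a : ZMod p) : ℂ :=
  Complex.exp (2 * Real.pi * Complex.I * (a.val : ℂ) / (p : ℂ))

/-- The `α`-large spectrum of a finite set `H ⊆ ZMod p`. -/
noncomputable def Spec (p : ℕ) (α : ℝ) (H : Finset (ZMod p)) : Set (ZMod p) :=
  {ξ | α * H.card ≤ ‖∑ x ∈ H, ep p (ξ * x)‖}

/-!
With `S(ξ) = ∑_{x ∈ H} ψ(ξx)`, rotate each `S(ξ)`, `ξ ∈ B`, by a unit `c_ξ` onto `‖S(ξ)‖`. Then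
`∑_{ξ ∈ B} ‖S(ξ)‖ = ∑_{x ∈ H} F(x)` with `F(x) = ∑_{ξ ∈ B} c_ξ ψ(ξx)`, so by Cauchy–Schwarz its
square is at most `|H| ∑_{x ∈ H} ‖F(x)‖² = |H| ∑_{ξ, η ∈ B} c_ξ c̄_η S(ξ - η)
≤ |H| ∑_{ξ, η ∈ B} ‖S(ξ - η)‖`. For `B` in the `α`-spectrum the left side is at least
`(α|B||H|)²`, while each `‖S(ξ - η)‖` is at most `|H|`, and at most `β|H|` unless `ξ - η` is in
the `β`-spectrum.
-/

section LargeSpectrum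

variable {R : Type*} [Ring R] (ψ : AddChar R Circle)

noncomputable def fourierSum (H : Finset R) (ξ : R) : ℂ :=
  ∑ x ∈ H, (ψ (ξ * x) : ℂ)

def largeSpectrum (H : Finset R) (α : ℝ) : Set R :=
  {ξ | α * #H ≤ ‖fourierSum ψ H ξ‖}

lemma norm_fourierSum_le (H : Finset R) (ξ : R) : ‖fourierSum ψ H ξ‖ ≤ #H := by
  simpa [fourierSum, Circle.norm_coe] using norm_sum_le H fun x ↦ (ψ (ξ * x) : ℂ)

lemma coe_addChar_mul_conj (a b : R) :
    (ψ a : ℂ) * (starRingEnd ℂ) (ψ b : ℂ) = ψ (a - b) := by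
  rw [← Circle.coe_inv_eq_conj, ← Circle.coe_mul, ← AddChar.map_neg_eq_inv,
    ← AddChar.map_add_eq_mul, sub_eq_add_neg]

lemma sum_mul_fourierSum_eq_sum (H B : Finset R) (c : R → ℂ) :
    ∑ ξ ∈ B, c ξ * fourierSum ψ H ξ = ∑ x ∈ H, ∑ ξ ∈ B, c ξ * ψ (ξ * x) := by
  simp only [fourierSum, mul_sum]
  exact sum_comm

lemma sum_norm_sum_sq_eq (H B : Finset R) (c : R → ℂ) :
    (∑ x ∈ H, ‖∑ ξ ∈ B, c ξ * ψ (ξ * x)‖ ^ 2 : ℝ) =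
      ∑ q ∈ B ×ˢ B, c q.1 * (starRingEnd ℂ) (c q.2) * fourierSum ψ H (q.1 - q.2) := by
  push_cast
  simp only [← Complex.mul_conj', map_sum, map_mul]
  simp_rw [sum_mul_sum]
  simp only [sum_product, fourierSum, mul_sum]
  rw [sum_comm]
  refine sum_congr rfl fun ξ _ ↦ ?_
  rw [sum_comm]
  refine sum_congr rfl fun η _ ↦ sum_congr rfl fun x _ ↦ ?_
  rw [sub_mul, ← coe_addChar_mul_conj]
  ring

lemma sum_norm_sum_sq_le (H B : Finset R) {c : R → ℂ} (hc : ∀ ξ ∈ B, ‖c ξ‖ ≤ 1) :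
    ∑ x ∈ H, ‖∑ ξ ∈ B, c ξ * ψ (ξ * x)‖ ^ 2 ≤
      ∑ q ∈ B ×ˢ B, ‖fourierSum ψ H (q.1 - q.2)‖ := by
  have h := congrArg Complex.re (sum_norm_sum_sq_eq ψ H B c)
  rw [Complex.ofReal_re] at h
  rw [h]
  refine (Complex.re_le_norm _).trans <| (norm_sum_le _ _).trans <| sum_le_sum fun q hq ↦ ?_
  obtain ⟨hq₁, hq₂⟩ := mem_product.mp hq
  rw [norm_mul, norm_mul, Complex.norm_conj]
  exact mul_le_of_le_one_left (norm_nonneg _)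
    (mul_le_one₀ (hc _ hq₁) (norm_nonneg _) (hc _ hq₂))

lemma sq_sum_norm_fourierSum_le (H B : Finset R) :
    (∑ ξ ∈ B, ‖fourierSum ψ H ξ‖) ^ 2 ≤
      #H * ∑ q ∈ B ×ˢ B, ‖fourierSum ψ H (q.1 - q.2)‖ := by
  choose c hc_norm hc using fun ξ ↦ Complex.exists_norm_eq_mul_self (fourierSum ψ H ξ)
  have h_dual : ∑ ξ ∈ B, ‖fourierSum ψ H ξ‖ ≤ ∑ x ∈ H, ‖∑ ξ ∈ B, c ξ * ψ (ξ * x)‖ :=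
    calc ∑ ξ ∈ B, ‖fourierSum ψ H ξ‖
        = ‖∑ x ∈ H, ∑ ξ ∈ B, c ξ * ψ (ξ * x)‖ := by
          rw [← sum_mul_fourierSum_eq_sum, ← sum_congr rfl fun ξ _ ↦ hc ξ, ← Complex.ofReal_sum,
            Complex.norm_of_nonneg (sum_nonneg fun ξ _ ↦ norm_nonneg _)]
      _ ≤ ∑ x ∈ H, ‖∑ ξ ∈ B, c ξ * ψ (ξ * x)‖ := norm_sum_le _ _
  calc (∑ ξ ∈ B, ‖fourierSum ψ H ξ‖) ^ 2
      ≤ (∑ x ∈ H, ‖∑ ξ ∈ B, c ξ * ψ (ξ * x)‖) ^ 2 := by gcongr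
    _ ≤ #H * ∑ x ∈ H, ‖∑ ξ ∈ B, c ξ * ψ (ξ * x)‖ ^ 2 := sq_sum_le_card_mul_sum_sq
    _ ≤ #H * ∑ q ∈ B ×ˢ B, ‖fourierSum ψ H (q.1 - q.2)‖ := by
      gcongr
      exact sum_norm_sum_sq_le ψ H B fun ξ _ ↦ (hc_norm ξ).le

open scoped Classical in
lemma sum_norm_fourierSum_le {ι : Type*} (H : Finset R) (s : Finset ι) (f : ι → R) {β : ℝ}
    (hβ : 0 ≤ β) :
    ∑ i ∈ s, ‖fourierSum ψ H (f i)‖ ≤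
      #{i ∈ s | f i ∈ largeSpectrum ψ H β} * #H + #s * (β * #H) := by
  rw [← sum_filter_add_sum_filter_not s fun i ↦ f i ∈ largeSpectrum ψ H β]
  gcongr ?_ + ?_
  · simpa using sum_le_sum fun i (_ : i ∈ {i ∈ s | f i ∈ largeSpectrum ψ H β}) ↦
      norm_fourierSum_le ψ H (f i)
  · calc ∑ i ∈ s with f i ∉ largeSpectrum ψ H β, ‖fourierSum ψ H (f i)‖
        ≤ ∑ i ∈ s with f i ∉ largeSpectrum ψ H β, β * #H :=
          sum_le_sum fun i hi ↦ (not_le.mp (mem_filter.mp hi).2).le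
      _ ≤ #s * (β * #H) := by
          rw [sum_const, nsmul_eq_mul]
          exact mul_le_mul_of_nonneg_right (mod_cast card_filter_le _ _)
            (mul_nonneg hβ (Nat.cast_nonneg _))

open scoped Classical in
theorem sq_sub_mul_card_sq_le_card_sub_mem_largeSpectrum {H B : Finset R}
    (hH : H.Nonempty) {α β : ℝ} (hα : 0 ≤ α) (hβ : 0 ≤ β) (hB : ↑B ⊆ largeSpectrum ψ H α) :
    (α ^ 2 - β) * #B ^ 2 ≤ #{q ∈ B ×ˢ B | q.1 - q.2 ∈ largeSpectrum ψ H β} := by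
  have hH_pos : (0 : ℝ) < #H := by exact_mod_cast hH.card_pos
  have h_lower : α * #B * #H ≤ ∑ ξ ∈ B, ‖fourierSum ψ H ξ‖ := by
    calc α * #B * #H = ∑ ξ ∈ B, α * #H := by rw [sum_const, nsmul_eq_mul]; ring
      _ ≤ ∑ ξ ∈ B, ‖fourierSum ψ H ξ‖ := sum_le_sum fun ξ hξ ↦ hB (mem_coe.mpr hξ)
  have h_upper := (sq_sum_norm_fourierSum_le ψ H B).trans <| mul_le_mul_of_nonneg_left
    (sum_norm_fourierSum_le ψ H (B ×ˢ B) (fun q ↦ q.1 - q.2) hβ) hH_pos.le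
  rw [card_product] at h_upper
  have h_sq := pow_le_pow_left₀ (by positivity) h_lower 2
  refine le_of_mul_le_mul_right ?_ (pow_pos hH_pos 2)
  push_cast at h_upper
  nlinarith

end LargeSpectrum

lemma ep_eq_toCircle (p : ℕ) [NeZero p] (a : ZMod p) : ep p a = ZMod.toCircle a := by
  rw [ZMod.toCircle_apply]
  rfl

lemma Spec_eq_largeSpectrum (p : ℕ) [NeZero p] (α : ℝ) (H : Finset (ZMod p)) :
    Spec p α H = largeSpectrum ZMod.toCircle H α := by
  simp only [Spec, largeSpectrum, fourierSum, ep_eq_toCircle]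

theorem stmt_9_general (p : ℕ) (hp : p.Prime) (H : Finset (ZMod p)) (hH : H.Nonempty)
    (α : ℝ) (hα₀ : 0 < α) (B : Finset (ZMod p))
    (hB : ↑B ⊆ Spec p α H) :
    α ^ 2 / 2 * (B.card : ℝ) ^ 2 ≤
      ({q : ZMod p × ZMod p | q.1 ∈ B ∧ q.2 ∈ B ∧
        q.1 - q.2 ∈ Spec p (α ^ 2 / 2) H}.ncard : ℝ) := by
  classical
  have : NeZero p := ⟨hp.ne_zero⟩
  rw [Spec_eq_largeSpectrum] at hB ⊢
  have h_pairs : {q : ZMod p × ZMod p | q.1 ∈ B ∧ q.2 ∈ B ∧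
      q.1 - q.2 ∈ largeSpectrum ZMod.toCircle H (α ^ 2 / 2)} =
      ↑{q ∈ B ×ˢ B | q.1 - q.2 ∈ largeSpectrum ZMod.toCircle H (α ^ 2 / 2)} := by
    ext
    simp [and_assoc]
  rw [h_pairs, Set.ncard_coe_finset]
  have := sq_sub_mul_card_sq_le_card_sub_mem_largeSpectrum ZMod.toCircle hH hα₀.le
    (by positivity : 0 ≤ α ^ 2 / 2) hB
  convert this using 2
  ring

theorem stmt_9 (p : ℕ) (hp : p.Prime) (H : Finset (ZMod p)) (hH : H.Nonempty)
    (α : ℝ) (hα₀ : 0 < α) (hα₁ : α < 1) (B : Finset (ZMod p))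
    (hB : ↑B ⊆ Spec p α H) :
    α ^ 2 / 2 * (B.card : ℝ) ^ 2 ≤
      ({q : ZMod p × ZMod p | q.1 ∈ B ∧ q.2 ∈ B ∧
        q.1 - q.2 ∈ Spec p (α ^ 2 / 2) H}.ncard : ℝ) :=
  stmt_9_general p hp H hH α hα₀ B hB
end
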